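/- arXiv:2110.10858 — 6 statements merged into one kernel-verified Lean document; each statement's English description precedes it below -/
import Mathlib

section
/- Let W ⊆ ℝ^d be a convex compact set, x* ∈ W, and let (G^t)_{t≥0} be vectors in ℝ^d and (η_t)_{t≥0} nonnegative step sizes with Σ_{t=0}^∞ η_t = ∞ and Σ_{t=0}^∞ η_t² < ∞. Define iterates x^0 ∈ W and x^{t+1} = [x^t − η_t G^t]_W, where [·]_W is Euclidean projection onto W. Suppose there exists M < ∞ with ‖G^t‖ ≤ M for all t, and there exist D* ∈ [0, max_{x∈W} ‖x − x*‖) and ξ > 0 such that for every t, if ‖x^t − x*‖ ≥ D* then ⟨x^t − x*, G^t⟩ ≥ ξ. Then limsup_{t→∞} ‖x^t − x*‖ ≤ D*. -/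
/-!
Write `f t = ‖x t - x*‖`. Projection onto the convex set `W` does not increase the distance to
`x* ∈ W`, so `f (t + 1) ≤ f t + M η_t`, and whenever `f t ≥ D*` the drift condition gives
`f (t + 1)² ≤ f t² - 2 ξ η_t + M² η_t²`, which is `≤ f t² - ξ η_t` once `η_t` is small.
As `∑ η_t = ∞`, `f` cannot stay above `D* + ε / 2` forever. Once the steps `M η_t` are below
`ε / 2`, `f` cannot jump from below `D* + ε / 2` to above `D* + ε`, and above `D* + ε / 2` it
decreases; so eventually `f < D* + ε`.
-/

open Filter Finset
open scoped RealInnerProductSpace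

lemma Convex.norm_sub_le_of_forall_norm_sub_le {F : Type*} [NormedAddCommGroup F]
    [InnerProductSpace ℝ F] {K : Set F} (hK : Convex ℝ K) {p y v : F} (hp : p ∈ K) (hv : v ∈ K)
    (hmin : ∀ w ∈ K, ‖p - y‖ ≤ ‖w - y‖) : ‖p - v‖ ≤ ‖y - v‖ := by
  have : Nonempty K := ⟨⟨p, hp⟩⟩
  have hinf : ‖y - p‖ = ⨅ w : K, ‖y - w‖ :=
    le_antisymm (le_ciInf fun w => by simpa only [norm_sub_rev y] using hmin w w.2)
      (ciInf_le ⟨0, Set.forall_mem_range.2 fun _ => norm_nonneg _⟩ (⟨p, hp⟩ : K))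
  have hobtuse : ⟪y - p, v - p⟫ ≤ 0 := (norm_eq_iInf_iff_real_inner_le_zero hK hp).1 hinf v hv
  have hexpand : ‖y - v‖ ^ 2 = ‖y - p‖ ^ 2 - 2 * ⟪y - p, v - p⟫ + ‖p - v‖ ^ 2 := by
    rw [← sub_add_sub_cancel y p v, norm_add_sq_real, ← neg_sub v p, inner_neg_right]
    ring
  exact le_of_sq_le_sq (by nlinarith [sq_nonneg ‖y - p‖]) (norm_nonneg _)

lemma Filter.not_tendsto_atTop_of_eventually_succ_le {u : ℕ → ℝ}
    (h : ∀ᶠ t in atTop, u (t + 1) ≤ u t) : ¬ Tendsto u atTop atTop := by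
  intro htop
  obtain ⟨T, hT⟩ := h.exists_forall_of_atTop
  have hbdd : ∀ t ≥ T, u t ≤ u T :=
    Nat.le_induction le_rfl fun t hTt ih => (hT t hTt).trans ih
  obtain ⟨t, ht⟩ := (htop.eventually_gt_atTop (u T)).and (eventually_ge_atTop T) |>.exists
  exact (hbdd t ht.2).not_gt ht.1

lemma Filter.Eventually.of_frequently_of_succ {P : ℕ → Prop}
    (hstep : ∀ᶠ t in atTop, P t → P (t + 1)) (hfreq : ∃ᶠ t in atTop, P t) :
    ∀ᶠ t in atTop, P t := by
  obtain ⟨T, hT⟩ := hstep.exists_forall_of_atTop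
  obtain ⟨t₀, hTt₀, ht₀⟩ := frequently_atTop.1 hfreq T
  exact eventually_atTop.2 ⟨t₀, Nat.le_induction ht₀ fun t ht ih => hT t (hTt₀.trans ht) ih⟩

section SquaredDescent

variable {f η : ℕ → ℝ} {ξ : ℝ}

lemma frequently_lt_of_sq_le_sub (hξ : 0 < ξ)
    (hdiv : Tendsto (fun T => ∑ t ∈ range T, η t) atTop atTop) {a : ℝ}
    (hdesc : ∀ᶠ t in atTop, a ≤ f t → f (t + 1) ^ 2 ≤ f t ^ 2 - ξ * η t) :
    ∃ᶠ t in atTop, f t < a := by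
  by_contra hfar
  simp only [not_frequently, not_lt] at hfar
  -- the energy `f t ^ 2 + ξ ∑_{s < t} η s` is eventually nonincreasing, yet unbounded
  let g t := f t ^ 2 + ξ * ∑ s ∈ range t, η s
  refine not_tendsto_atTop_of_eventually_succ_le (u := g) ?_ ?_
  · filter_upwards [hfar, hdesc] with t hat ht
    have := ht hat
    simp only [g, sum_range_succ]
    linarith
  · exact tendsto_atTop_mono (fun t => le_add_of_nonneg_left (sq_nonneg (f t)))
      (hdiv.const_mul_atTop hξ)

lemma limsup_le_of_sq_le_sub_add_sq (hf : ∀ t, 0 ≤ f t) (hη : ∀ t, 0 ≤ η t)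
    (hη0 : Tendsto η atTop (nhds 0)) (hdiv : Tendsto (fun T => ∑ t ∈ range T, η t) atTop atTop)
    (hξ : 0 < ξ) {C D : ℝ} (hgrow : ∀ t, f (t + 1) ≤ f t + C * η t)
    (hdrift : ∀ t, D ≤ f t → f (t + 1) ^ 2 ≤ f t ^ 2 - 2 * ξ * η t + C ^ 2 * η t ^ 2) :
    limsup f atTop ≤ D := by
  have hdesc : ∀ᶠ t in atTop, D ≤ f t → f (t + 1) ^ 2 ≤ f t ^ 2 - ξ * η t := by
    have := (mul_zero (C ^ 2) ▸ hη0.const_mul (C ^ 2)).eventually_le_const hξ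
    filter_upwards [this] with t hsmall hD
    nlinarith [hdrift t hD, mul_le_mul_of_nonneg_left hsmall (hη t)]
  refine le_of_forall_pos_le_add fun ε hε => limsup_le_of_le
    (isCoboundedUnder_le_of_le atTop hf) ?_
  have htrap : ∀ᶠ t in atTop, f t < D + ε → f (t + 1) < D + ε := by
    have := (mul_zero C ▸ hη0.const_mul C).eventually_lt_const (half_pos hε)
    filter_upwards [this, hdesc] with t hsmall hdec hlt
    by_cases hnear : f t < D + ε / 2
    · linarith [hgrow t]
    · have hsq : f (t + 1) ^ 2 ≤ f t ^ 2 := by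
        nlinarith [hdec (by linarith), mul_nonneg hξ.le (hη t)]
      exact ((pow_le_pow_iff_left₀ (hf _) (hf _) two_ne_zero).1 hsq).trans_lt hlt
  have hfreq : ∃ᶠ t in atTop, f t < D + ε :=
    (frequently_lt_of_sq_le_sub hξ hdiv (a := D + ε / 2)
      (hdesc.mono fun t h ha => h (by linarith))).mono fun t h => by linarith
  exact (htrap.of_frequently_of_succ hfreq).mono fun t h => h.le

end SquaredDescent

section GradientStep

variable {E : Type*} [NormedAddCommGroup E] [InnerProductSpace ℝ E] {x z G : E} {η M : ℝ}

lemma norm_sub_smul_sub_le (hη : 0 ≤ η) (hG : ‖G‖ ≤ M) : ‖x - η • G - z‖ ≤ ‖x - z‖ + M * η := by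
  calc ‖x - η • G - z‖ = ‖(x - z) - η • G‖ := by rw [sub_right_comm]
    _ ≤ ‖x - z‖ + ‖η • G‖ := norm_sub_le _ _
    _ ≤ ‖x - z‖ + M * η := by
      rw [norm_smul, Real.norm_of_nonneg hη, mul_comm]
      gcongr

lemma norm_sub_smul_sub_sq_le (hη : 0 ≤ η) (hG : ‖G‖ ≤ M) :
    ‖x - η • G - z‖ ^ 2 ≤ ‖x - z‖ ^ 2 - 2 * η * ⟪x - z, G⟫ + M ^ 2 * η ^ 2 := by
  have hM : ‖G‖ ^ 2 ≤ M ^ 2 := pow_le_pow_left₀ (norm_nonneg G) hG 2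
  rw [sub_right_comm, norm_sub_sq_real, real_inner_smul_right, norm_smul, Real.norm_of_nonneg hη]
  nlinarith [mul_le_mul_of_nonneg_left hM (sq_nonneg η)]

end GradientStep

theorem stmt0_general {d : ℕ}
    (W : Set (EuclideanSpace ℝ (Fin d))) (hWconv : Convex ℝ W)
    -- `proj` is the Euclidean projection onto `W`
    (proj : EuclideanSpace ℝ (Fin d) → EuclideanSpace ℝ (Fin d))
    (hproj : ∀ y, proj y ∈ W ∧ ∀ w ∈ W, ‖proj y - y‖ ≤ ‖w - y‖)
    (xstar : EuclideanSpace ℝ (Fin d)) (hxW : xstar ∈ W)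
    (G : ℕ → EuclideanSpace ℝ (Fin d))
    (η : ℕ → ℝ) (hη : ∀ t, 0 ≤ η t)
    (hηdiv : Tendsto (fun T => ∑ t ∈ Finset.range T, η t) atTop atTop)
    (hηsq : Summable fun t => η t ^ 2)
    (x : ℕ → EuclideanSpace ℝ (Fin d))
    (hupd : ∀ t, x (t + 1) = proj (x t - η t • G t))
    (M : ℝ) (hM : ∀ t, ‖G t‖ ≤ M)
    (Dstar ξ : ℝ)
    (hξ : 0 < ξ)
    (hdrift : ∀ t, Dstar ≤ ‖x t - xstar‖ → ξ ≤ ⟪x t - xstar, G t⟫) :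
    limsup (fun t => ‖x t - xstar‖) atTop ≤ Dstar := by
  have hη0 : Tendsto η atTop (nhds 0) := by
    simpa [Real.sqrt_sq (hη _)] using hηsq.tendsto_atTop_zero.sqrt
  have hproj_step : ∀ t, ‖x (t + 1) - xstar‖ ≤ ‖x t - η t • G t - xstar‖ := fun t =>
    hupd t ▸ hWconv.norm_sub_le_of_forall_norm_sub_le (hproj _).1 hxW (hproj _).2
  refine limsup_le_of_sq_le_sub_add_sq (fun t => norm_nonneg _) hη hη0 hηdiv hξ (C := M)
    (fun t => (hproj_step t).trans (norm_sub_smul_sub_le (hη t) (hM t))) fun t hfar => ?_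
  calc ‖x (t + 1) - xstar‖ ^ 2 ≤ ‖x t - η t • G t - xstar‖ ^ 2 :=
        pow_le_pow_left₀ (norm_nonneg _) (hproj_step t) 2
    _ ≤ ‖x t - xstar‖ ^ 2 - 2 * η t * ⟪x t - xstar, G t⟫ + M ^ 2 * η t ^ 2 :=
        norm_sub_smul_sub_sq_le (hη t) (hM t)
    _ ≤ ‖x t - xstar‖ ^ 2 - 2 * ξ * η t + M ^ 2 * η t ^ 2 := by
        nlinarith [mul_le_mul_of_nonneg_left (hdrift t hfar) (hη t)]

/-- Lemma 1 of the paper: convergence of projected iterates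
`x^{t+1} = [x^t − η_t G^t]_W` under a bounded-update and drift condition. -/
theorem stmt0 {d : ℕ} (hd : 1 ≤ d)
    (W : Set (EuclideanSpace ℝ (Fin d))) (hWconv : Convex ℝ W) (hWcomp : IsCompact W)
    -- `proj` is the Euclidean projection onto `W`
    (proj : EuclideanSpace ℝ (Fin d) → EuclideanSpace ℝ (Fin d))
    (hproj : ∀ y, proj y ∈ W ∧ ∀ w ∈ W, ‖proj y - y‖ ≤ ‖w - y‖)
    (xstar : EuclideanSpace ℝ (Fin d)) (hxW : xstar ∈ W)
    (G : ℕ → EuclideanSpace ℝ (Fin d))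
    (η : ℕ → ℝ) (hη : ∀ t, 0 ≤ η t)
    (hηdiv : Tendsto (fun T => ∑ t ∈ Finset.range T, η t) atTop atTop)
    (hηsq : Summable fun t => η t ^ 2)
    (x : ℕ → EuclideanSpace ℝ (Fin d)) (hx0 : x 0 ∈ W)
    (hupd : ∀ t, x (t + 1) = proj (x t - η t • G t))
    (M : ℝ) (hM : ∀ t, ‖G t‖ ≤ M)
    (Dstar ξ : ℝ) (hD0 : 0 ≤ Dstar)
    (hDlt : Dstar < sSup ((fun w => ‖w - xstar‖) '' W))
    (hξ : 0 < ξ)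
    (hdrift : ∀ t, Dstar ≤ ‖x t - xstar‖ → ξ ≤ ⟪x t - xstar, G t⟫) :
    limsup (fun t => ‖x t - xstar‖) atTop ≤ Dstar :=
  stmt0_general W hWconv proj hproj xstar hxW G η hη hηdiv hηsq x hupd M hM Dstar ξ hξ hdrift
end

section
/- (Theorem 1, Problem C.) Suppose each ∇Q_i is μ-Lipschitz (Assumption 1), for every S ⊆ {1,…,n} with |S| ≥ n−r the average Q_S is γ-strongly convex (Assumption 2), the cost functions satisfy (0,r;ε)-redundancy, and the step sizes η_t ≥ 0 satisfy Σ_t η_t = ∞ and Σ_t η_t² < ∞. For each t let S^t ⊆ {1,…,n} be an arbitrary subset with |S^t| = n−r, and define iterates x^0 ∈ W and x^{t+1} = [x^t − η_t Σ_{j∈S^t} ∇Q_j(x^t)]_W. If α := 1 − (r/n)·(μ/γ) > 0 and D := (2rμ/(αγ))·ε, then limsup_{t→∞} ‖x^t − x*‖ ≤ D. -/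
/-!
Write `h_t = ‖x^t - x*‖`. Nonexpansiveness of the projection towards `x* ∈ W` and strong convexity
of `Q_{S^t}` give `h_{t+1}² ≤ h_t² - 2 η_t (a h_t² - b h_t) + C η_t²` with `a = (n - r) γ` and `b`
any bound on `‖∑_{j ∈ S^t} ∇Q_j(x*)‖`. Redundancy gives `b = r (n - r) μ ε`: the minimizer of
`Q_{S^t}` lies within `ε` of `x*`, and `∑_{j ∈ S^t} ∇Q_j` is `(n - r) μ`-Lipschitz.
Adding the tail `C ∑_{s ≥ t} η_s²` turns `h_t²` into a Lyapunov function that decreases while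
`h_t > b / a` and can exceed that level only by `O(η_t)`. As `∑ η_t = ∞`, `h_t` keeps returning
below any level above `b / a` and afterwards stays close to it, so
`limsup h_t ≤ b / a = r μ ε / γ ≤ D`.
-/

open Filter Finset Function Metric
open scoped RealInnerProductSpace Topology

section Descent

lemma le_max_of_succ_le_max {v : ℕ → ℝ} {L : ℝ} {t₀ : ℕ}
    (hv : ∀ t ≥ t₀, v (t + 1) ≤ max (v t) L) : ∀ t ≥ t₀, v t ≤ max (v t₀) L := by
  intro t ht
  induction t, ht using Nat.le_induction with
  | base => exact le_max_left _ _
  | succ t ht ih => exact (hv t ht).trans (max_le ih (le_max_right _ _))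

lemma not_eventually_le_sub_mul {v η : ℕ → ℝ} {κ : ℝ} (hv : ∀ t, 0 ≤ v t) (hκ : 0 < κ)
    (hη : Tendsto (fun T => ∑ t ∈ range T, η t) atTop atTop) :
    ¬∀ᶠ t in atTop, v (t + 1) ≤ v t - κ * η t := by
  intro hdesc
  obtain ⟨T, hT⟩ := eventually_atTop.mp hdesc
  have hanti : AntitoneOn (fun t => v t + κ * ∑ s ∈ range t, η s) {t | T ≤ t} :=
    antitoneOn_nat_Ici_of_succ_le fun t ht => by
      simp only [sum_range_succ]
      linarith [hT t ht]
  obtain ⟨t, hlarge, hTt⟩ :=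
    (((hη.const_mul_atTop hκ).eventually_gt_atTop (v T + κ * ∑ s ∈ range T, η s)).and
      (eventually_ge_atTop T)).exists
  linarith [hanti (le_refl T) hTt hTt, hv t]

lemma eventually_le_add_of_lyapunov {h e η : ℕ → ℝ} {a b ε : ℝ} (hh : ∀ t, 0 ≤ h t)
    (he : ∀ t, 0 ≤ e t) (he0 : Tendsto e atTop (𝓝 0)) (ha : 0 < a) (hb : 0 ≤ b) (hε : 0 < ε)
    (hη : ∀ t, 0 ≤ η t) (hη0 : Tendsto η atTop (𝓝 0))
    (hηdiv : Tendsto (fun T => ∑ t ∈ range T, η t) atTop atTop)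
    (hstep : ∀ t, h (t + 1) ^ 2 + e (t + 1) ≤
      h t ^ 2 + e t - 2 * η t * (a * h t ^ 2 - b * h t)) :
    ∀ᶠ t in atTop, h t ≤ b / a + ε := by
  set ρ := b / a with hρ
  have hbρ : b = a * ρ := by rw [hρ]; field_simp
  have hρ0 : 0 ≤ ρ := div_nonneg hb ha.le
  set δ := ε / 2 with hδ
  have hδ0 : 0 < δ := half_pos hε
  have hfreq : ∃ᶠ t in atTop, h t < ρ + δ := by
    intro hlarge
    refine not_eventually_le_sub_mul (v := fun t => h t ^ 2 + e t)
      (fun t => add_nonneg (sq_nonneg _) (he t)) (κ := 2 * (a * ((ρ + δ) * δ))) (by positivity)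
      hηdiv (hlarge.mono fun t ht => ?_)
    have hprod : (ρ + δ) * δ ≤ h t * (h t - ρ) :=
      mul_le_mul (not_lt.mp ht) (by linarith [not_lt.mp ht]) hδ0.le (hh t)
    have hgain : a * ((ρ + δ) * δ) ≤ a * h t ^ 2 - b * h t := by
      rw [hbρ]; nlinarith [mul_le_mul_of_nonneg_left hprod ha.le]
    nlinarith [hstep t, mul_le_mul_of_nonneg_left hgain (hη t)]
  have hroom : ∀ᶠ t in atTop, η t * (a * ρ ^ 2 / 2) + e t < (ρ + ε) ^ 2 - (ρ + δ) ^ 2 := by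
    have hlim : Tendsto (fun t => η t * (a * ρ ^ 2 / 2) + e t) atTop (𝓝 0) := by
      simpa using (hη0.mul_const _).add he0
    exact hlim.eventually_lt_const (by nlinarith)
  have hmax : ∀ᶠ t in atTop, h (t + 1) ^ 2 + e (t + 1) ≤ max (h t ^ 2 + e t) ((ρ + ε) ^ 2) := by
    filter_upwards [hroom] with t ht
    rcases lt_or_ge (h t) (ρ + δ) with hsmall | hlarge
    · have hsq : h t ^ 2 ≤ (ρ + δ) ^ 2 := pow_le_pow_left₀ (hh t) hsmall.le 2
      have hloss : -(a * ρ ^ 2 / 4) ≤ a * h t ^ 2 - b * h t := by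
        rw [hbρ]; nlinarith [mul_nonneg ha.le (sq_nonneg (h t - ρ / 2))]
      refine le_max_of_le_right ?_
      nlinarith [hstep t, mul_le_mul_of_nonneg_left hloss (hη t)]
    · have hgain : 0 ≤ a * h t ^ 2 - b * h t := by
        rw [hbρ]; nlinarith [mul_nonneg (mul_nonneg ha.le (hh t)) (by linarith : 0 ≤ h t - ρ)]
      exact le_max_of_le_left (by nlinarith [hstep t, mul_nonneg (hη t) hgain])
  obtain ⟨T, hT⟩ := eventually_atTop.mp (hroom.and hmax)
  obtain ⟨t₀, hTt₀, ht₀⟩ := frequently_atTop.mp hfreq T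
  have hstart : h t₀ ^ 2 + e t₀ ≤ (ρ + ε) ^ 2 := by
    nlinarith [(hT t₀ hTt₀).1, pow_le_pow_left₀ (hh t₀) ht₀.le 2,
      mul_nonneg (hη t₀) (by positivity : 0 ≤ a * ρ ^ 2 / 2)]
  filter_upwards [eventually_ge_atTop t₀] with t ht
  have htrap := le_max_of_succ_le_max (v := fun t => h t ^ 2 + e t)
    (fun s hs => (hT s (hTt₀.trans hs)).2) t ht
  rw [max_eq_right hstart] at htrap
  exact (pow_le_pow_iff_left₀ (hh t) (by positivity) two_ne_zero).mp (by linarith [he t])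

theorem limsup_le_div_of_sq_le {h η : ℕ → ℝ} {a b c : ℝ} (hh : ∀ t, 0 ≤ h t) (ha : 0 < a)
    (hb : 0 ≤ b) (hc : 0 ≤ c) (hη : ∀ t, 0 ≤ η t)
    (hηdiv : Tendsto (fun T => ∑ t ∈ range T, η t) atTop atTop)
    (hηsq : Summable fun t => η t ^ 2)
    (hstep : ∀ t, h (t + 1) ^ 2 ≤ h t ^ 2 - 2 * η t * (a * h t ^ 2 - b * h t) + η t ^ 2 * c) :
    limsup h atTop ≤ b / a := by
  -- the tail `c ∑_{s ≥ t} η_s²` absorbs the second-order terms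
  set e := fun t => c * ∑' s, η (s + t) ^ 2
  have he : ∀ t, 0 ≤ e t := fun t => mul_nonneg hc (tsum_nonneg fun s => sq_nonneg _)
  have he0 : Tendsto e atTop (𝓝 0) := by
    simpa using (tendsto_sum_nat_add fun s => η s ^ 2).const_mul c
  have htail : ∀ t, e t = η t ^ 2 * c + e (t + 1) := fun t => by
    have h₀ := hηsq.sum_add_tsum_nat_add t
    have h₁ := hηsq.sum_add_tsum_nat_add (t + 1)
    rw [sum_range_succ] at h₁
    simp only [e]
    linear_combination c * (h₀ - h₁)
  have hη0 : Tendsto η atTop (𝓝 0) := by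
    simpa [Real.sqrt_sq (hη _)] using hηsq.tendsto_atTop_zero.sqrt
  refine le_of_forall_pos_le_add fun ε hε => limsup_le_of_le (isCoboundedUnder_le_of_le atTop hh)
    (eventually_le_add_of_lyapunov hh he he0 ha hb hε hη hη0 hηdiv fun t => ?_)
  rw [htail t]
  linarith [hstep t]

end Descent

section ProjectedGradient

variable {F : Type*} [NormedAddCommGroup F] [InnerProductSpace ℝ F]

lemma Convex.norm_sub_le_of_forall_norm_sub_le_s2 {W : Set F} (hW : Convex ℝ W) {p y w : F}
    (hp : p ∈ W) (hpy : ∀ z ∈ W, ‖p - y‖ ≤ ‖z - y‖) (hw : w ∈ W) : ‖p - w‖ ≤ ‖y - w‖ := by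
  have : Nonempty W := ⟨⟨p, hp⟩⟩
  have hinf : ‖y - p‖ = ⨅ z : W, ‖y - z‖ :=
    le_antisymm (le_ciInf fun z => by simpa only [norm_sub_rev y] using hpy z z.2)
      (ciInf_le (f := fun z : W => ‖y - z‖) ⟨0, by rintro _ ⟨z, rfl⟩; exact norm_nonneg _⟩ ⟨p, hp⟩)
  have hobtuse : ⟪y - p, w - p⟫ ≤ 0 := (norm_eq_iInf_iff_real_inner_le_zero hW hp).mp hinf w hw
  have hexpand : ‖y - w‖ ^ 2 = ‖y - p‖ ^ 2 - 2 * ⟪y - p, w - p⟫ + ‖p - w‖ ^ 2 := by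
    rw [← sub_sub_sub_cancel_right y w p, norm_sub_sq_real, norm_sub_rev w p]
  exact (pow_le_pow_iff_left₀ (norm_nonneg _) (norm_nonneg _) two_ne_zero).mp
    (by nlinarith [sq_nonneg ‖y - p‖])

lemma Convex.norm_sub_sq_le_of_gradient_step {W : Set F} (hW : Convex ℝ W) {p u g w : F}
    {η a b C : ℝ} (hp : p ∈ W) (hpy : ∀ z ∈ W, ‖p - (u - η • g)‖ ≤ ‖z - (u - η • g)‖)
    (hw : w ∈ W) (hη : 0 ≤ η) (hg : a * ‖u - w‖ ^ 2 - b * ‖u - w‖ ≤ ⟪g, u - w⟫)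
    (hC : ‖g‖ ≤ C) :
    ‖p - w‖ ^ 2 ≤ ‖u - w‖ ^ 2 - 2 * η * (a * ‖u - w‖ ^ 2 - b * ‖u - w‖) + η ^ 2 * C ^ 2 := by
  have hexpand : ‖u - η • g - w‖ ^ 2 = ‖u - w‖ ^ 2 - 2 * η * ⟪g, u - w⟫ + η ^ 2 * ‖g‖ ^ 2 := by
    rw [sub_right_comm, norm_sub_sq_real, real_inner_smul_right, norm_smul, real_inner_comm,
      mul_pow, Real.norm_eq_abs, sq_abs]
    ring
  have hproj := pow_le_pow_left₀ (norm_nonneg _) (hW.norm_sub_le_of_forall_norm_sub_le_s2 hp hpy hw) 2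
  nlinarith [mul_le_mul_of_nonneg_left hg (by linarith : 0 ≤ 2 * η),
    mul_le_mul_of_nonneg_left (pow_le_pow_left₀ (norm_nonneg _) hC 2) (sq_nonneg η)]

theorem limsup_norm_sub_le_of_projected_gradient {W : Set F} (hW : Convex ℝ W)
    (hWb : Bornology.IsBounded W) {proj : F → F}
    (hproj : ∀ y, proj y ∈ W ∧ ∀ z ∈ W, ‖proj y - y‖ ≤ ‖z - y‖)
    {G : ℕ → F → F} {w : F} {a b L : ℝ} (hw : w ∈ W) (ha : 0 < a) (hL : 0 ≤ L)
    (hmono : ∀ t y, a * ‖y - w‖ ^ 2 ≤ ⟪G t y - G t w, y - w⟫)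
    (hlip : ∀ t y, ‖G t y - G t w‖ ≤ L * ‖y - w‖) (hb : ∀ t, ‖G t w‖ ≤ b)
    {η : ℕ → ℝ} (hη : ∀ t, 0 ≤ η t)
    (hηdiv : Tendsto (fun T => ∑ t ∈ range T, η t) atTop atTop)
    (hηsq : Summable fun t => η t ^ 2)
    {x : ℕ → F} (hx₀ : x 0 ∈ W) (hx : ∀ t, x (t + 1) = proj (x t - η t • G t (x t))) :
    limsup (fun t => ‖x t - w‖) atTop ≤ b / a := by
  obtain ⟨M, hM⟩ := (isBounded_iff_subset_closedBall w).mp hWb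
  have hxW : ∀ t, x t ∈ W := fun t => by
    cases t with
    | zero => exact hx₀
    | succ t => exact hx t ▸ (hproj _).1
  have hxM : ∀ t, ‖x t - w‖ ≤ M := fun t => mem_closedBall_iff_norm.mp (hM (hxW t))
  have hGx : ∀ t, ‖G t (x t)‖ ≤ L * M + b := fun t =>
    (norm_le_norm_sub_add _ (G t w)).trans
      (add_le_add ((hlip t _).trans (mul_le_mul_of_nonneg_left (hxM t) hL)) (hb t))
  have hinner : ∀ t, a * ‖x t - w‖ ^ 2 - b * ‖x t - w‖ ≤ ⟪G t (x t), x t - w⟫ := fun t => by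
    have hsplit := inner_sub_left (𝕜 := ℝ) (G t (x t)) (G t w) (x t - w)
    nlinarith [hmono t (x t), neg_le_of_abs_le (abs_real_inner_le_norm (G t w) (x t - w)),
      mul_le_mul_of_nonneg_right (hb t) (norm_nonneg (x t - w))]
  refine limsup_le_div_of_sq_le (fun t => norm_nonneg _) ha ((norm_nonneg _).trans (hb 0))
    (sq_nonneg (L * M + b)) hη hηdiv hηsq fun t => ?_
  rw [hx t]
  exact hW.norm_sub_sq_le_of_gradient_step (hproj _).1 (hproj _).2 hw (hη t) (hinner t) (hGx t)

end ProjectedGradient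

lemma nonneg_of_norm_sub_le_mul_norm_sub {E E' : Type*} [NormedAddCommGroup E] [Nontrivial E]
    [SeminormedAddCommGroup E'] {f : E → E'} {μ : ℝ} (hf : ∀ x y, ‖f x - f y‖ ≤ μ * ‖x - y‖) :
    0 ≤ μ := by
  obtain ⟨x, hx⟩ := exists_ne (0 : E)
  have hx0 := hf x 0
  rw [sub_zero] at hx0
  exact nonneg_of_mul_nonneg_left ((norm_nonneg _).trans hx0) (norm_pos_iff.mpr hx)

lemma norm_sum_sub_sum_le {ι E E' : Type*} [SeminormedAddCommGroup E]
    [SeminormedAddCommGroup E'] (s : Finset ι) {G : ι → E → E'} {μ : ℝ} (hG : ∀ i x y, ‖G i x - G i y‖ ≤ μ * ‖x - y‖) (x y : E) :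
    ‖∑ i ∈ s, G i x - ∑ i ∈ s, G i y‖ ≤ s.card * (μ * ‖x - y‖) := by
  rw [← sum_sub_distrib]
  exact (norm_sum_le _ _).trans
    ((sum_le_sum fun i _ => hG i x y).trans_eq (by rw [sum_const, nsmul_eq_mul]))

section Gradient

variable {F : Type*} [NormedAddCommGroup F] [InnerProductSpace ℝ F]

lemma injective_of_le_inner_smul_sub {G : F → F} {γ c : ℝ} (hγ : 0 < γ)
    (hG : ∀ x y, γ * ‖x - y‖ ^ 2 ≤ ⟪c • (G x - G y), x - y⟫) : Injective G := by
  intro x y hxy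
  have hle := hG x y
  rw [hxy, sub_self, smul_zero, inner_zero_left] at hle
  have hsq : ‖x - y‖ ^ 2 = 0 :=
    le_antisymm (nonpos_of_mul_nonpos_right hle hγ) (sq_nonneg _)
  simpa [sub_eq_zero] using hsq

variable [CompleteSpace F]

lemma hasGradientAt_finset_sum {ι : Type*} (s : Finset ι) {f : ι → F → ℝ} {x : F}
    (hf : ∀ i ∈ s, DifferentiableAt ℝ (f i) x) :
    HasGradientAt (fun y => ∑ i ∈ s, f i y) (∑ i ∈ s, gradient (f i) x) x := by
  rw [hasGradientAt_iff_hasFDerivAt, map_sum]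
  exact HasFDerivAt.fun_sum fun i hi => hasGradientAt_iff_hasFDerivAt.mp (hf i hi).hasGradientAt

lemma IsLocalMin.hasGradientAt_eq_zero {f : F → ℝ} {g a : F} (hmin : IsLocalMin f a)
    (hg : HasGradientAt f g a) : g = 0 := by
  simpa using hmin.hasFDerivAt_eq_zero (hasGradientAt_iff_hasFDerivAt.mp hg)

lemma sum_gradient_eq_zero_of_forall_le {ι : Type*} {s : Finset ι} {f : ι → F → ℝ} {y : F}
    (hf : ∀ i ∈ s, DifferentiableAt ℝ (f i) y) (hy : ∀ z, ∑ i ∈ s, f i y ≤ ∑ i ∈ s, f i z) :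
    ∑ i ∈ s, gradient (f i) y = 0 :=
  IsLocalMin.hasGradientAt_eq_zero (Eventually.of_forall hy) (hasGradientAt_finset_sum s hf)

lemma setOf_forall_sum_le_eq_singleton {ι : Type*} {s : Finset ι} {f : ι → F → ℝ} {y : F}
    (hf : ∀ i x, DifferentiableAt ℝ (f i) x)
    (hinj : Injective fun x => ∑ i ∈ s, gradient (f i) x)
    (hy : ∀ z, ∑ i ∈ s, f i y ≤ ∑ i ∈ s, f i z) :
    {x | ∀ z, ∑ i ∈ s, f i x ≤ ∑ i ∈ s, f i z} = {y} := by
  refine Set.eq_singleton_iff_unique_mem.mpr ⟨hy, fun x hx => hinj ?_⟩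
  simp only [sum_gradient_eq_zero_of_forall_le (fun i _ => hf i x) hx,
    sum_gradient_eq_zero_of_forall_le (fun i _ => hf i y) hy]

lemma norm_sum_gradient_le_of_hausdorffDist_le {ι : Type*} [Fintype ι] {f : ι → F → ℝ}
    {μ ε : ℝ} (hμ : 0 ≤ μ) (hf : ∀ i x, DifferentiableAt ℝ (f i) x)
    (hlip : ∀ i x y, ‖gradient (f i) x - gradient (f i) y‖ ≤ μ * ‖x - y‖) {T : Finset ι}
    (hinjT : Injective fun x => ∑ i ∈ T, gradient (f i) x)
    (hinj : Injective fun x => ∑ i, gradient (f i) x) {x₀ : F}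
    (hx₀ : ∀ z, ∑ i, f i x₀ ≤ ∑ i, f i z)
    (hne : {y | ∀ z, ∑ i ∈ T, f i y ≤ ∑ i ∈ T, f i z}.Nonempty)
    (hdist : hausdorffDist {y | ∀ z, ∑ i ∈ T, f i y ≤ ∑ i ∈ T, f i z}
      {y | ∀ z, ∑ i, f i y ≤ ∑ i, f i z} ≤ ε) :
    ‖∑ i ∈ T, gradient (f i) x₀‖ ≤ T.card * (μ * ε) := by
  obtain ⟨y, hy⟩ := hne
  rw [setOf_forall_sum_le_eq_singleton hf hinjT hy, setOf_forall_sum_le_eq_singleton hf hinj hx₀,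
    hausdorffDist_singleton, dist_eq_norm] at hdist
  calc ‖∑ i ∈ T, gradient (f i) x₀‖
      = ‖∑ i ∈ T, gradient (f i) x₀ - ∑ i ∈ T, gradient (f i) y‖ := by
        rw [sum_gradient_eq_zero_of_forall_le (fun i _ => hf i y) hy, sub_zero]
    _ ≤ T.card * (μ * ‖x₀ - y‖) := norm_sum_sub_sum_le T hlip x₀ y
    _ ≤ T.card * (μ * ε) := by rw [norm_sub_rev]; gcongr

/-- The factor `r` accounts for `r = 0`, where `T = univ` and the sum vanishes at `x₀`. -/
lemma norm_sum_gradient_le_of_redundancy {n r : ℕ} {f : Fin n → F → ℝ} {μ γ ε : ℝ}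
    (hμ : 0 ≤ μ) (hγ : 0 < γ) (hf : ∀ i x, DifferentiableAt ℝ (f i) x)
    (hlip : ∀ i x y, ‖gradient (f i) x - gradient (f i) y‖ ≤ μ * ‖x - y‖)
    (hsc : ∀ T : Finset (Fin n), n ≤ T.card + r → ∀ x y : F,
      γ * ‖x - y‖ ^ 2 ≤
        ⟪(T.card : ℝ)⁻¹ • (∑ j ∈ T, gradient (f j) x - ∑ j ∈ T, gradient (f j) y), x - y⟫)
    (hred : ∀ T : Finset (Fin n), n ≤ T.card + r →
      ({y : F | ∀ z, ∑ i ∈ T, f i y ≤ ∑ i ∈ T, f i z}.Nonempty ∧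
        hausdorffDist {y : F | ∀ z, ∑ i ∈ T, f i y ≤ ∑ i ∈ T, f i z}
          {y : F | ∀ z, ∑ i, f i y ≤ ∑ i, f i z} ≤ ε))
    {x₀ : F} (hx₀ : ∀ z, ∑ i, f i x₀ ≤ ∑ i, f i z) {T : Finset (Fin n)} (hT : T.card + r = n) :
    ‖∑ i ∈ T, gradient (f i) x₀‖ ≤ r * (T.card * (μ * ε)) := by
  rcases Nat.eq_zero_or_pos r with rfl | hr
  · rw [eq_univ_of_card T (by simpa using hT),
      sum_gradient_eq_zero_of_forall_le (fun i _ => hf i x₀) hx₀]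
    simp
  have huniv : n ≤ (univ : Finset (Fin n)).card + r := by simp
  obtain ⟨hne, hdist⟩ := hred T hT.ge
  calc ‖∑ i ∈ T, gradient (f i) x₀‖ ≤ T.card * (μ * ε) :=
        norm_sum_gradient_le_of_hausdorffDist_le hμ hf hlip
          (injective_of_le_inner_smul_sub hγ (hsc T hT.ge))
          (injective_of_le_inner_smul_sub hγ (hsc univ huniv)) hx₀ hne hdist
    _ ≤ r * (T.card * (μ * ε)) :=
        le_mul_of_one_le_left (mul_nonneg (Nat.cast_nonneg _) (mul_nonneg hμ
          (hausdorffDist_nonneg.trans (hred univ huniv).2))) (by exact_mod_cast hr)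

end Gradient

/-- Theorem 1, Problem C: asymptotic convergence of asynchronous
distributed gradient descent under (0,r;ε)-redundancy. -/
theorem stmt2 {d n r : ℕ} (hd : 1 ≤ d) (hrn : r < n)
    (Q : Fin n → EuclideanSpace ℝ (Fin d) → ℝ) (μ γ ε : ℝ) (hγ : 0 < γ)
    (hdiff : ∀ i x, DifferentiableAt ℝ (Q i) x)
    -- Assumption 1: each ∇Q_i is μ-Lipschitz
    (hlip : ∀ i x y,
      ‖gradient (Q i) x - gradient (Q i) y‖ ≤ μ * ‖x - y‖)
    -- Assumption 2: averages over sets of ≥ n−r agents are γ-strongly convex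
    (hsc : ∀ S : Finset (Fin n), n ≤ S.card + r →
      ∀ x y : EuclideanSpace ℝ (Fin d),
        γ * ‖x - y‖ ^ 2 ≤
          ⟪(S.card : ℝ)⁻¹ •
              (∑ j ∈ S, gradient (Q j) x - ∑ j ∈ S, gradient (Q j) y), x - y⟫)
    -- (0,r;ε)-redundancy
    (hred : ∀ Shat : Finset (Fin n), n ≤ Shat.card + r →
      ({y : EuclideanSpace ℝ (Fin d) |
          ∀ z, ∑ i ∈ Shat, Q i y ≤ ∑ i ∈ Shat, Q i z}.Nonempty ∧
        Metric.hausdorffDist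
          {y : EuclideanSpace ℝ (Fin d) | ∀ z, ∑ i ∈ Shat, Q i y ≤ ∑ i ∈ Shat, Q i z}
          {y : EuclideanSpace ℝ (Fin d) | ∀ z, ∑ i, Q i y ≤ ∑ i, Q i z} ≤ ε))
    -- step sizes
    (η : ℕ → ℝ) (hη : ∀ t, 0 ≤ η t)
    (hηdiv : Tendsto (fun T => ∑ t ∈ Finset.range T, η t) atTop atTop)
    (hηsq : Summable fun t => η t ^ 2)
    -- convex compact set W and Euclidean projection onto it
    (W : Set (EuclideanSpace ℝ (Fin d))) (hWconv : Convex ℝ W) (hWcomp : IsCompact W)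
    (proj : EuclideanSpace ℝ (Fin d) → EuclideanSpace ℝ (Fin d))
    (hproj : ∀ y, proj y ∈ W ∧ ∀ w ∈ W, ‖proj y - y‖ ≤ ‖w - y‖)
    -- the (unique) minimizer of the total cost lies in W
    (xstar : EuclideanSpace ℝ (Fin d)) (hxW : xstar ∈ W)
    (hxmin : ∀ z, ∑ i, Q i xstar ≤ ∑ i, Q i z)
    -- at each iteration an arbitrary set of n−r agents responds
    (S : ℕ → Finset (Fin n)) (hS : ∀ t, (S t).card + r = n)
    -- iterates
    (x : ℕ → EuclideanSpace ℝ (Fin d)) (hx0 : x 0 ∈ W)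
    (hupd : ∀ t, x (t + 1) =
      proj (x t - η t • ∑ j ∈ S t, gradient (Q j) (x t)))
    (α D : ℝ) (hα : α = 1 - (r : ℝ) / n * (μ / γ)) (hαpos : 0 < α)
    (hD : D = 2 * r * μ / (α * γ) * ε) :
    limsup (fun t => ‖x t - xstar‖) atTop ≤ D := by
  have hm : (0 : ℝ) < n - r := sub_pos.mpr (by exact_mod_cast hrn)
  have hcard : ∀ t, ((S t).card : ℝ) = n - r := fun t => by
    rw [eq_sub_iff_add_eq]; exact_mod_cast hS t
  have : Nonempty (Fin d) := ⟨⟨0, hd⟩⟩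
  have hμ : 0 ≤ μ := nonneg_of_norm_sub_le_mul_norm_sub (hlip ⟨0, by omega⟩)
  have hε : 0 ≤ ε := hausdorffDist_nonneg.trans (hred univ (by simp)).2
  have hmono : ∀ t y, (n - r) * γ * ‖y - xstar‖ ^ 2 ≤
      ⟪∑ j ∈ S t, gradient (Q j) y - ∑ j ∈ S t, gradient (Q j) xstar, y - xstar⟫ := by
    intro t y
    have hsc' := hsc (S t) (hS t).ge y xstar
    rw [real_inner_smul_left, hcard t, ← div_eq_inv_mul, le_div_iff₀ hm] at hsc'
    linarith
  have hlim := limsup_norm_sub_le_of_projected_gradient hWconv hWcomp.isBounded hproj hxW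
    (mul_pos hm hγ) (mul_nonneg hm.le hμ) hmono
    (fun t y => (norm_sum_sub_sum_le (S t) hlip y xstar).trans_eq (by rw [hcard t, mul_assoc]))
    (fun t => hcard t ▸ norm_sum_gradient_le_of_redundancy hμ hγ hdiff hlip hsc hred hxmin (hS t))
    hη hηdiv hηsq hx0 hupd
  have hα1 : α ≤ 1 := by rw [hα]; linarith [show 0 ≤ (r : ℝ) / n * (μ / γ) by positivity]
  calc limsup (fun t => ‖x t - xstar‖) atTop ≤ r * ((n - r) * (μ * ε)) / ((n - r) * γ) := hlim
    _ = r * μ * ε / γ := by field_simp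
    _ ≤ 2 / α * (r * μ * ε / γ) :=
        le_mul_of_one_le_left (by positivity) ((one_le_div hαpos).mpr (by linarith))
    _ = D := by rw [hD]; field_simp
end

section
/- Suppose each ∇Q_i is μ-Lipschitz (Assumption 1), for every S ⊆ {1,…,n} with |S| ≥ n−r the average Q_S is γ-strongly convex (Assumption 2), the cost functions satisfy (0,r;ε)-redundancy, and α := 1 − (r/n)·(μ/γ) > 0. Then for every x ∈ ℝ^d and every S ⊆ {1,…,n} with |S| = n−r, ⟨x − x*, Σ_{j∈S} ∇Q_j(x)⟩ ≥ α·n·γ·‖x − x*‖·(‖x − x*‖ − 2rμε/(αγ)), where x* is the unique minimizer of Σ_{i∈[n]} Q_i. -/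
/-!
Strong convexity of every large partial sum makes its minimizer unique, so redundancy places
the minimizer of any `n - r` or `n - r + 1` agents within `ε` of `x*`. For an agent `i ∉ S`,
comparing the minimizers of `S` and of `S ∪ {i}` shows `‖∇Q_i‖ ≤ |S| μ · 2ε` at the latter,
and Lipschitz continuity transports this to `x`. Hence the `r` agents outside `S` perturb the
strongly monotone total gradient `∑ ∇Q_i` by at most `r (μ ‖x - x*‖ + 2 n μ ε)`.
-/

open Finset
open scoped RealInnerProductSpace

section Gradient

variable {E : Type*} [NormedAddCommGroup E] [InnerProductSpace ℝ E] [CompleteSpace E]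

theorem gradient_fun_sum {ι : Type*} {u : Finset ι} {f : ι → E → ℝ} {x : E}
    (h : ∀ i ∈ u, DifferentiableAt ℝ (f i) x) :
    gradient (fun y => ∑ i ∈ u, f i y) x = ∑ i ∈ u, gradient (f i) x := by
  simp only [gradient, fderiv_fun_sum h, map_sum]

theorem IsLocalMin.gradient_eq_zero {f : E → ℝ} {a : E} (h : IsLocalMin f a) :
    gradient f a = 0 := by
  rw [gradient, h.fderiv_eq_zero, map_zero]

end Gradient

def argminSet {E : Type*} (f : E → ℝ) : Set E := {y | ∀ z, f y ≤ f z}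

theorem eq_of_eq_zero_of_strongly_monotone {E : Type*} [NormedAddCommGroup E]
    [InnerProductSpace ℝ E] {G : E → E} {γ c : ℝ} (hγ : 0 < γ)
    (hG : ∀ x y, γ * ‖x - y‖ ^ 2 ≤ ⟪c • (G x - G y), x - y⟫) {x y : E}
    (hx : G x = 0) (hy : G y = 0) : x = y := by
  have h := hG x y
  rw [hx, hy, sub_zero, smul_zero, inner_zero_left] at h
  simpa [sub_eq_zero] using nonpos_of_mul_nonpos_right h hγ

section Redundancy

variable {E : Type*} [NormedAddCommGroup E] [InnerProductSpace ℝ E] [CompleteSpace E]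
  {ι : Type*} {Q : ι → E → ℝ}

theorem sum_gradient_eq_zero_of_mem_argminSet {T : Finset ι} {w : E}
    (hdiff : ∀ i ∈ T, DifferentiableAt ℝ (Q i) w)
    (hw : w ∈ argminSet fun y => ∑ i ∈ T, Q i y) :
    ∑ i ∈ T, gradient (Q i) w = 0 := by
  rw [← gradient_fun_sum hdiff]
  exact IsLocalMin.gradient_eq_zero (Filter.Eventually.of_forall hw)

theorem argminSet_sum_eq_singleton (hdiff : ∀ i x, DifferentiableAt ℝ (Q i) x)
    {T : Finset ι} {γ c : ℝ} (hγ : 0 < γ)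
    (hmono : ∀ x y, γ * ‖x - y‖ ^ 2 ≤
      ⟪c • (∑ i ∈ T, gradient (Q i) x - ∑ i ∈ T, gradient (Q i) y), x - y⟫)
    {w : E} (hw : w ∈ argminSet fun y => ∑ i ∈ T, Q i y) :
    (argminSet fun y => ∑ i ∈ T, Q i y) = {w} :=
  Set.eq_singleton_iff_unique_mem.2 ⟨hw, fun _ hy =>
    eq_of_eq_zero_of_strongly_monotone (G := fun x => ∑ i ∈ T, gradient (Q i) x) hγ hmono
      (sum_gradient_eq_zero_of_mem_argminSet (fun i _ => hdiff i _) hy)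
      (sum_gradient_eq_zero_of_mem_argminSet (fun i _ => hdiff i _) hw)⟩

theorem exists_sum_gradient_eq_zero_norm_sub_le [Fintype ι]
    (hdiff : ∀ i x, DifferentiableAt ℝ (Q i) x) {T : Finset ι} {γ c : ℝ} (hγ : 0 < γ)
    (hmono : ∀ x y, γ * ‖x - y‖ ^ 2 ≤
      ⟪c • (∑ i ∈ T, gradient (Q i) x - ∑ i ∈ T, gradient (Q i) y), x - y⟫)
    {xstar : E} (hxstar : (argminSet fun y => ∑ i, Q i y) = {xstar}) {ε : ℝ}
    (hred : (argminSet fun y => ∑ i ∈ T, Q i y).Nonempty ∧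
      Metric.hausdorffDist (argminSet fun y => ∑ i ∈ T, Q i y)
        (argminSet fun y => ∑ i, Q i y) ≤ ε) :
    ∃ w, ∑ i ∈ T, gradient (Q i) w = 0 ∧ ‖w - xstar‖ ≤ ε := by
  obtain ⟨⟨w, hw⟩, hdist⟩ := hred
  rw [argminSet_sum_eq_singleton hdiff hγ hmono hw, hxstar, Metric.hausdorffDist_singleton,
    dist_eq_norm] at hdist
  exact ⟨w, sum_gradient_eq_zero_of_mem_argminSet (fun i _ => hdiff i w) hw, hdist⟩

variable [DecidableEq ι] {μ : ℝ}

theorem norm_gradient_le_of_sum_gradient_eq_zero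
    (hlip : ∀ i x y, ‖gradient (Q i) x - gradient (Q i) y‖ ≤ μ * ‖x - y‖)
    {S : Finset ι} {i : ι} (hi : i ∉ S) {xS xT : E} (hxS : ∑ j ∈ S, gradient (Q j) xS = 0)
    (hxT : ∑ j ∈ insert i S, gradient (Q j) xT = 0) :
    ‖gradient (Q i) xT‖ ≤ S.card * (μ * ‖xT - xS‖) := by
  rw [sum_insert hi, add_eq_zero_iff_eq_neg] at hxT
  rw [hxT, norm_neg, ← sub_zero (∑ j ∈ S, _), ← hxS, ← sum_sub_distrib]
  calc ‖∑ j ∈ S, (gradient (Q j) xT - gradient (Q j) xS)‖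
      ≤ ∑ _j ∈ S, μ * ‖xT - xS‖ := norm_sum_le_of_le S fun j _ => hlip j xT xS
    _ = S.card * (μ * ‖xT - xS‖) := by rw [sum_const, nsmul_eq_mul]

theorem norm_gradient_le_of_near_minimizers
    (hlip : ∀ i x y, ‖gradient (Q i) x - gradient (Q i) y‖ ≤ μ * ‖x - y‖) (hμ : 0 ≤ μ)
    {S : Finset ι} {i : ι} (hi : i ∉ S)
    {x xstar xS xT : E} {ε : ℝ} (hxS : ∑ j ∈ S, gradient (Q j) xS = 0)
    (hxT : ∑ j ∈ insert i S, gradient (Q j) xT = 0)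
    (hxS_near : ‖xS - xstar‖ ≤ ε) (hxT_near : ‖xT - xstar‖ ≤ ε) :
    ‖gradient (Q i) x‖ ≤ μ * ‖x - xstar‖ + (2 * S.card + 1) * μ * ε := by
  have hxT_xS : ‖xT - xS‖ ≤ 2 * ε := by
    linarith [norm_sub_le_norm_sub_add_norm_sub xT xstar xS, norm_sub_rev xstar xS]
  have hx_xT : ‖x - xT‖ ≤ ‖x - xstar‖ + ε := by
    linarith [norm_sub_le_norm_sub_add_norm_sub x xstar xT, norm_sub_rev xstar xT]
  calc ‖gradient (Q i) x‖
      ≤ ‖gradient (Q i) x - gradient (Q i) xT‖ + ‖gradient (Q i) xT‖ :=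
        norm_le_norm_sub_add _ _
    _ ≤ μ * ‖x - xT‖ + S.card * (μ * ‖xT - xS‖) :=
        add_le_add (hlip i x xT) (norm_gradient_le_of_sum_gradient_eq_zero hlip hi hxS hxT)
    _ ≤ μ * (‖x - xstar‖ + ε) + S.card * (μ * (2 * ε)) := by gcongr
    _ = μ * ‖x - xstar‖ + (2 * S.card + 1) * μ * ε := by ring

theorem norm_gradient_le_of_forall_exists_near [Fintype ι]
    (hlip : ∀ i x y, ‖gradient (Q i) x - gradient (Q i) y‖ ≤ μ * ‖x - y‖) (hμ : 0 ≤ μ)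
    {r : ℕ} {xstar : E} {ε : ℝ}
    (near : ∀ T : Finset ι, Fintype.card ι ≤ T.card + r →
      ∃ w, ∑ j ∈ T, gradient (Q j) w = 0 ∧ ‖w - xstar‖ ≤ ε)
    {S : Finset ι} (hS : S.card + r = Fintype.card ι) {i : ι} (hi : i ∉ S) (x : E) :
    ‖gradient (Q i) x‖ ≤ μ * ‖x - xstar‖ + 2 * Fintype.card ι * μ * ε := by
  obtain ⟨xS, hxS, hxS_near⟩ := near S hS.ge
  obtain ⟨xT, hxT, hxT_near⟩ :=
    near (insert i S) (by rw [card_insert_of_notMem hi]; omega)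
  have hS_lt : S.card < Fintype.card ι := card_lt_univ_of_notMem hi
  have hcard : (2 * S.card + 1 : ℝ) ≤ 2 * Fintype.card ι := by
    exact_mod_cast (by omega : 2 * S.card + 1 ≤ 2 * Fintype.card ι)
  have hε : 0 ≤ ε := (norm_nonneg _).trans hxS_near
  refine (norm_gradient_le_of_near_minimizers hlip hμ hi hxS hxT hxS_near hxT_near).trans ?_
  gcongr

end Redundancy

theorem le_inner_of_strongly_monotone_of_norm_perturbation_le {E : Type*}
    [NormedAddCommGroup E] [InnerProductSpace ℝ E] {u a b : E} {n r μ γ ε α : ℝ}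
    (hn : 0 < n) (hγ : 0 < γ) (hα : α = 1 - r / n * (μ / γ)) (hαpos : 0 < α)
    (hmono : n * γ * ‖u‖ ^ 2 ≤ ⟪u, a + b⟫) (hb : ‖b‖ ≤ r * (μ * ‖u‖ + 2 * n * μ * ε)) :
    α * n * γ * ‖u‖ * (‖u‖ - 2 * r * μ * ε / (α * γ)) ≤ ⟪u, a⟫ := by
  have hub : ⟪u, b⟫ ≤ ‖u‖ * (r * (μ * ‖u‖ + 2 * n * μ * ε)) :=
    (real_inner_le_norm u b).trans (mul_le_mul_of_nonneg_left hb (norm_nonneg u))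
  rw [inner_add_right] at hmono
  have e1 : α * n * γ = n * γ - r * μ := by rw [hα]; field_simp
  have e2 : α * n * γ * (2 * r * μ * ε / (α * γ)) = 2 * n * r * μ * ε := by field_simp
  calc α * n * γ * ‖u‖ * (‖u‖ - 2 * r * μ * ε / (α * γ))
      = α * n * γ * ‖u‖ ^ 2 - α * n * γ * (2 * r * μ * ε / (α * γ)) * ‖u‖ := by ring
    _ = (n * γ - r * μ) * ‖u‖ ^ 2 - 2 * n * r * μ * ε * ‖u‖ := by rw [e2, e1]
    _ ≤ ⟪u, a⟫ := by linear_combination hmono + hub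

theorem stmt7_general {d n r : ℕ} (hrn : r < n)
    (Q : Fin n → EuclideanSpace ℝ (Fin d) → ℝ) (μ γ ε : ℝ) (hγ : 0 < γ)
    (hdiff : ∀ i x, DifferentiableAt ℝ (Q i) x)
    -- Assumption 1: each ∇Q_i is μ-Lipschitz
    (hlip : ∀ i x y,
      ‖gradient (Q i) x - gradient (Q i) y‖ ≤ μ * ‖x - y‖)
    -- Assumption 2: averages over sets of ≥ n−r agents are γ-strongly convex
    (hsc : ∀ S : Finset (Fin n), n ≤ S.card + r →
      ∀ x y : EuclideanSpace ℝ (Fin d),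
        γ * ‖x - y‖ ^ 2 ≤
          ⟪(S.card : ℝ)⁻¹ •
              (∑ j ∈ S, gradient (Q j) x - ∑ j ∈ S, gradient (Q j) y), x - y⟫)
    -- (0,r;ε)-redundancy
    (hred : ∀ Shat : Finset (Fin n), n ≤ Shat.card + r →
      ({y : EuclideanSpace ℝ (Fin d) |
          ∀ z, ∑ i ∈ Shat, Q i y ≤ ∑ i ∈ Shat, Q i z}.Nonempty ∧
        Metric.hausdorffDist
          {y : EuclideanSpace ℝ (Fin d) | ∀ z, ∑ i ∈ Shat, Q i y ≤ ∑ i ∈ Shat, Q i z}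
          {y : EuclideanSpace ℝ (Fin d) | ∀ z, ∑ i, Q i y ≤ ∑ i, Q i z} ≤ ε))
    -- x* is the (unique) minimizer of the total cost
    (xstar : EuclideanSpace ℝ (Fin d))
    (hxmin : ∀ z, ∑ i, Q i xstar ≤ ∑ i, Q i z)
    (α : ℝ) (hα : α = 1 - (r : ℝ) / n * (μ / γ)) (hαpos : 0 < α) :
    ∀ x : EuclideanSpace ℝ (Fin d), ∀ S : Finset (Fin n), S.card + r = n →
      α * n * γ * ‖x - xstar‖ * (‖x - xstar‖ - 2 * r * μ * ε / (α * γ)) ≤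
        ⟪x - xstar, ∑ j ∈ S, gradient (Q j) x⟫ := by
  intro x S hS
  rcases eq_or_ne x xstar with rfl | hx
  · simp
  have hn : (0 : ℝ) < n := by exact_mod_cast Nat.zero_lt_of_lt hrn
  have hμ : 0 ≤ μ := nonneg_of_mul_nonneg_left
    ((norm_nonneg _).trans (hlip ⟨0, Nat.zero_lt_of_lt hrn⟩ x xstar))
    (norm_pos_iff.2 (sub_ne_zero.2 hx))
  have hxstar : (argminSet fun y => ∑ i, Q i y) = {xstar} :=
    argminSet_sum_eq_singleton hdiff hγ (hsc univ (by simp)) hxmin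
  have near (T : Finset (Fin n)) (hT : Fintype.card (Fin n) ≤ T.card + r) :
      ∃ w, ∑ i ∈ T, gradient (Q i) w = 0 ∧ ‖w - xstar‖ ≤ ε := by
    rw [Fintype.card_fin] at hT
    exact exists_sum_gradient_eq_zero_norm_sub_le hdiff hγ (hsc T hT) hxstar (hred T hT)
  have hfull : n * γ * ‖x - xstar‖ ^ 2 ≤ ⟪x - xstar, ∑ i, gradient (Q i) x⟫ := by
    have h := hsc univ (by simp) x xstar
    rwa [card_univ, Fintype.card_fin,
      sum_gradient_eq_zero_of_mem_argminSet (fun i _ => hdiff i _) hxmin, sub_zero,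
      real_inner_smul_left, le_inv_mul_iff₀ hn, ← mul_assoc, real_inner_comm] at h
  have hcompl :
      ‖∑ j ∈ Sᶜ, gradient (Q j) x‖ ≤ r * (μ * ‖x - xstar‖ + 2 * n * μ * ε) := by
    calc ‖∑ j ∈ Sᶜ, gradient (Q j) x‖
        ≤ ∑ _j ∈ Sᶜ, (μ * ‖x - xstar‖ + 2 * n * μ * ε) :=
          norm_sum_le_of_le _ fun i hi => by
            simpa using norm_gradient_le_of_forall_exists_near hlip hμ near
              (by simpa using hS) (mem_compl.1 hi) x
      _ = r * (μ * ‖x - xstar‖ + 2 * n * μ * ε) := by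
          rw [sum_const, card_compl, Fintype.card_fin, nsmul_eq_mul,
            show n - S.card = r by omega]
  rw [← sum_add_sum_compl S] at hfull
  exact le_inner_of_strongly_monotone_of_norm_perturbation_le hn hγ hα hαpos hfull hcompl

/-- lower bound on ⟨x − x*, Σ_{j∈S} ∇Q_j(x)⟩ for any set S of n−r agents,
under Assumptions 1–2 and (0,r;ε)-redundancy. -/
theorem stmt7 {d n r : ℕ} (hd : 1 ≤ d) (hrn : r < n)
    (Q : Fin n → EuclideanSpace ℝ (Fin d) → ℝ) (μ γ ε : ℝ) (hγ : 0 < γ)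
    (hdiff : ∀ i x, DifferentiableAt ℝ (Q i) x)
    -- Assumption 1: each ∇Q_i is μ-Lipschitz
    (hlip : ∀ i x y,
      ‖gradient (Q i) x - gradient (Q i) y‖ ≤ μ * ‖x - y‖)
    -- Assumption 2: averages over sets of ≥ n−r agents are γ-strongly convex
    (hsc : ∀ S : Finset (Fin n), n ≤ S.card + r →
      ∀ x y : EuclideanSpace ℝ (Fin d),
        γ * ‖x - y‖ ^ 2 ≤
          ⟪(S.card : ℝ)⁻¹ •
              (∑ j ∈ S, gradient (Q j) x - ∑ j ∈ S, gradient (Q j) y), x - y⟫)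
    -- (0,r;ε)-redundancy
    (hred : ∀ Shat : Finset (Fin n), n ≤ Shat.card + r →
      ({y : EuclideanSpace ℝ (Fin d) |
          ∀ z, ∑ i ∈ Shat, Q i y ≤ ∑ i ∈ Shat, Q i z}.Nonempty ∧
        Metric.hausdorffDist
          {y : EuclideanSpace ℝ (Fin d) | ∀ z, ∑ i ∈ Shat, Q i y ≤ ∑ i ∈ Shat, Q i z}
          {y : EuclideanSpace ℝ (Fin d) | ∀ z, ∑ i, Q i y ≤ ∑ i, Q i z} ≤ ε))
    -- x* is the (unique) minimizer of the total cost
    (xstar : EuclideanSpace ℝ (Fin d))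
    (hxmin : ∀ z, ∑ i, Q i xstar ≤ ∑ i, Q i z)
    (α : ℝ) (hα : α = 1 - (r : ℝ) / n * (μ / γ)) (hαpos : 0 < α) :
    ∀ x : EuclideanSpace ℝ (Fin d), ∀ S : Finset (Fin n), S.card + r = n →
      α * n * γ * ‖x - xstar‖ * (‖x - xstar‖ - 2 * r * μ * ε / (α * γ)) ≤
        ⟪x - xstar, ∑ j ∈ S, gradient (Q j) x⟫ :=
  stmt7_general hrn Q μ γ ε hγ hdiff hlip hsc hred xstar hxmin α hα hαpos
end

section
/- Let n > f ≥ 0 be integers and 0 < γ ≤ μ real numbers with (n−f)γ − 2fμ > 0; set α := ((n−f)γ − 2fμ)/(nγ) and η̄ := 2nγα/((n−f)²μ²). Then for every step size η with 0 < η < η̄, the quantity ρ := 1 − 2(n−f)ηγ + 4fημ + (n−f)²η²μ² satisfies 0 ≤ ρ < 1. -/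
/-- the convergence-rate parameter ρ for Problem BS (CGE filter) lies in
[0,1) for any step size 0 < η < η̄. -/
theorem stmt14 (n f : ℕ) (γ μ : ℝ) (hfn : f < n) (hγ : 0 < γ) (hγμ : γ ≤ μ)
    (hmargin : 0 < ((n : ℝ) - f) * γ - 2 * f * μ)
    (α ηbar : ℝ)
    (hα : α = (((n : ℝ) - f) * γ - 2 * f * μ) / (n * γ))
    (hηbar : ηbar = 2 * n * γ * α / (((n : ℝ) - f) ^ 2 * μ ^ 2)) :
    ∀ η : ℝ, 0 < η → η < ηbar →
      (0 ≤ 1 - 2 * ((n : ℝ) - f) * η * γ + 4 * f * η * μ + ((n : ℝ) - f) ^ 2 * η ^ 2 * μ ^ 2 ∧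
        1 - 2 * ((n : ℝ) - f) * η * γ + 4 * f * η * μ + ((n : ℝ) - f) ^ 2 * η ^ 2 * μ ^ 2 < 1) := by
  intro η hη hηlt
  set A : ℝ := ((n : ℝ) - f) * γ - 2 * f * μ with hA
  have hnf : (0:ℝ) < (n:ℝ) - f := by
    have h : (f:ℝ) < (n:ℝ) := Nat.cast_lt.mpr hfn
    linarith
  have hμ : (0:ℝ) < μ := lt_of_lt_of_le hγ hγμ
  have hB : (0:ℝ) < ((n : ℝ) - f) ^ 2 * μ ^ 2 := by positivity
  have hn : (0:ℝ) < (n:ℝ) := by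
    have : (0:ℝ) ≤ (f:ℝ) := Nat.cast_nonneg f
    linarith
  -- ηbar = 2A / B
  have hηbar' : ηbar = 2 * A / (((n : ℝ) - f) ^ 2 * μ ^ 2) := by
    rw [hηbar, hα]
    field_simp
  have hlt : η * (((n : ℝ) - f) ^ 2 * μ ^ 2) < 2 * A := by
    have := hηlt
    rw [hηbar'] at this
    calc η * (((n : ℝ) - f) ^ 2 * μ ^ 2)
        < (2 * A / (((n : ℝ) - f) ^ 2 * μ ^ 2)) * (((n : ℝ) - f) ^ 2 * μ ^ 2) := by
          exact mul_lt_mul_of_pos_right this hB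
      _ = 2 * A := by field_simp
  have hAle : A ≤ ((n : ℝ) - f) * μ := by
    have h1 : ((n : ℝ) - f) * γ ≤ ((n : ℝ) - f) * μ :=
      mul_le_mul_of_nonneg_left hγμ hnf.le
    have h2 : (0:ℝ) ≤ 2 * f * μ := by positivity
    linarith
  have hA2 : A ^ 2 ≤ ((n : ℝ) - f) ^ 2 * μ ^ 2 := by
    have : A ^ 2 ≤ (((n : ℝ) - f) * μ) ^ 2 :=
      pow_le_pow_left₀ hmargin.le hAle 2
    calc A ^ 2 ≤ (((n : ℝ) - f) * μ) ^ 2 := this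
      _ = ((n : ℝ) - f) ^ 2 * μ ^ 2 := by ring
  constructor
  · nlinarith [sq_nonneg (1 - η * A), sq_nonneg η]
  · nlinarith [mul_pos hη hη]
end

section
/- Let n, f, r ≥ 0 be integers with n − r − f > 0 and n ≥ 2f + r/2, and let 0 < γ ≤ μ be real numbers with (n−f)γ − 2(f+r)μ > 0; set α := ((n−f)γ − 2(f+r)μ)/((n−r)γ) and η̄ := 2(n−r)γα/((n−r−f)²μ²). Then for every step size η with 0 < η < η̄, the quantity ρ := 1 − 2(n−f)ηγ + 4(f+r)ημ + (n−r−f)²η²μ² satisfies 0 ≤ ρ < 1. -/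
private lemma stmt15aux (A B η : ℝ) (hη : 0 < η) (hA2 : A ^ 2 ≤ B)
    (hBη : B * η < 2 * A) :
    0 ≤ 1 - 2 * A * η + B * η ^ 2 ∧ 1 - 2 * A * η + B * η ^ 2 < 1 := by
  constructor
  · nlinarith [sq_nonneg (A * η - 1), mul_nonneg (by linarith : (0:ℝ) ≤ B - A ^ 2) (sq_nonneg η)]
  · nlinarith [mul_neg_of_pos_of_neg hη (by linarith : B * η - 2 * A < 0)]

/-- the convergence-rate parameter ρ for Problem DS (CGE filter) lies in
[0,1) for any step size 0 < η < η̄. -/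
theorem stmt15 (n f r : ℕ) (γ μ : ℝ) (hnrf : f + r < n)
    (hn : 2 * (f : ℝ) + (r : ℝ) / 2 ≤ n)
    (hγ : 0 < γ) (hγμ : γ ≤ μ)
    (hmargin : 0 < ((n : ℝ) - f) * γ - 2 * ((f : ℝ) + r) * μ)
    (α ηbar : ℝ)
    (hα : α = (((n : ℝ) - f) * γ - 2 * ((f : ℝ) + r) * μ) / (((n : ℝ) - r) * γ))
    (hηbar : ηbar = 2 * ((n : ℝ) - r) * γ * α / (((n : ℝ) - r - f) ^ 2 * μ ^ 2)) :
    ∀ η : ℝ, 0 < η → η < ηbar →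
      (0 ≤ 1 - 2 * ((n : ℝ) - f) * η * γ + 4 * ((f : ℝ) + r) * η * μ
            + ((n : ℝ) - r - f) ^ 2 * η ^ 2 * μ ^ 2 ∧
        1 - 2 * ((n : ℝ) - f) * η * γ + 4 * ((f : ℝ) + r) * η * μ
            + ((n : ℝ) - r - f) ^ 2 * η ^ 2 * μ ^ 2 < 1) := by
  intro η hη hηlt
  have hμ : 0 < μ := lt_of_lt_of_le hγ hγμ
  have hnrf' : ((f : ℝ) + r) < n := by exact_mod_cast hnrf
  have hfr : (0:ℝ) ≤ (f : ℝ) := Nat.cast_nonneg f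
  have hrr : (0:ℝ) ≤ (r : ℝ) := Nat.cast_nonneg r
  have hnr : (0:ℝ) < (n : ℝ) - r := by linarith
  have hB : (0:ℝ) < ((n : ℝ) - r - f) ^ 2 * μ ^ 2 := by
    have h1 : (0:ℝ) < (n : ℝ) - r - f := by linarith
    positivity
  set A : ℝ := ((n : ℝ) - f) * γ - 2 * ((f : ℝ) + r) * μ with hA
  set B : ℝ := ((n : ℝ) - r - f) ^ 2 * μ ^ 2 with hBdef
  have hηbar' : ηbar = 2 * A / B := by
    rw [hηbar, hα]
    field_simp
  -- η < 2A/B, so B*η < 2A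
  have hBη : B * η < 2 * A := by
    have := hηlt
    rw [hηbar'] at this
    have := (lt_div_iff₀ hB).mp this
    linarith [this]
  -- A ≤ (n - r - f) * μ, hence A^2 ≤ B
  have hAle : A ≤ ((n : ℝ) - r - f) * μ := by
    have h1 : ((n : ℝ) - f) * γ ≤ ((n : ℝ) - f) * μ := by
      have : (0:ℝ) ≤ (n : ℝ) - f := by linarith
      nlinarith
    have : A ≤ ((n : ℝ) - 3*f - 2*r) * μ := by rw [hA]; nlinarith
    nlinarith
  have hA2 : A ^ 2 ≤ B := by
    have hApos : 0 < A := hmargin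
    have : ((n : ℝ) - r - f) > 0 := by linarith
    calc A ^ 2 ≤ (((n : ℝ) - r - f) * μ) ^ 2 := by nlinarith
      _ = B := by rw [hBdef]; ring
  have hρ : 1 - 2 * ((n : ℝ) - f) * η * γ + 4 * ((f : ℝ) + r) * η * μ
      + ((n : ℝ) - r - f) ^ 2 * η ^ 2 * μ ^ 2 = 1 - 2 * A * η + B * η ^ 2 := by
    rw [hA, hBdef]; ring
  rw [hρ]
  exact stmt15aux A B η hη hA2 hBη
end

section
/- (One-step bound for Problem CS.) Suppose each ∇Q_i is μ-Lipschitz (Assumption 1), for every S ⊆ {1,…,n} with |S| ≥ n−r the average Q_S is γ-strongly convex (Assumption 2), and the cost functions satisfy (0,r;ε)-redundancy. Let W ⊆ ℝ^d be convex compact with x* ∈ W and Γ := max_{w∈W} ‖w − x*‖. Fix x ∈ W, a set S ⊆ {1,…,n} with |S| = n−r, a step size η > 0, and random vectors g_j ∈ ℝ^d (j ∈ S) on a probability space with E[g_j] = ∇Q_j(x) and E‖g_j − ∇Q_j(x)‖² ≤ σ² for each j ∈ S. Let x⁺ := [x − η Σ_{j∈S} g_j]_W. Then E‖x⁺ − x*‖²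 ≤ (1 − 2(nγ − rμ)η + (n−r)²η²μ²)·‖x − x*‖² + 4nημε(r + (n−r)²ημ)·Γ + 4n²(n−r)²η²μ²ε² + (n−r)²η²σ². -/
/-!
Let `h = ∑_{j ∈ S} ∇Q_j(x)`. Strong convexity makes every minimiser unique, so redundancy says that
dropping agent `j` moves the minimiser `x*` to some `y` with `‖y - x*‖ ≤ ε`. At `y` the gradient
`∇Q_j(y)` equals the full gradient sum, which is within `nμε` of its value `0` at `x*`; hence
`‖∇Q_j(x*)‖ ≤ 2nμε` as soon as `r ≥ 1`. Since `∑_{j ∈ S} ∇Q_j(x*) = -∑_{j ∉ S} ∇Q_j(x*)`, this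
gives `⟪h, x - x*⟫ ≥ (nγ - rμ)‖x - x*‖² - 2rnμεΓ` and `‖h‖ ≤ (n-r)μ‖x - x*‖ + 2n(n-r)με`, and
expanding `‖x - x* - ηh‖²` yields the deterministic part of the bound. The stochastic error
`η ∑_{j ∈ S} (g_j - ∇Q_j(x))` has mean zero, so it only adds its second moment, at most
`(n-r)²η²σ²` by Cauchy–Schwarz. Finally, the projection onto `W` is nonexpansive and fixes `x*`.
-/

open Finset MeasureTheory
open scoped RealInnerProductSpace

section Gradient

variable {ι E : Type*} [NormedAddCommGroup E] [InnerProductSpace ℝ E] [CompleteSpace E]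

theorem gradient_finset_sum {f : ι → E → ℝ} {T : Finset ι} {x : E}
    (hf : ∀ i ∈ T, DifferentiableAt ℝ (f i) x) :
    gradient (fun y => ∑ i ∈ T, f i y) x = ∑ i ∈ T, gradient (f i) x := by
  simp only [gradient, fderiv_fun_sum hf, map_sum]

theorem sum_gradient_eq_zero_of_forall_sum_le {f : ι → E → ℝ} {T : Finset ι} {y : E}
    (hf : ∀ i ∈ T, DifferentiableAt ℝ (f i) y) (hy : ∀ z, ∑ i ∈ T, f i y ≤ ∑ i ∈ T, f i z) :
    ∑ i ∈ T, gradient (f i) y = 0 := by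
  have hmin : IsLocalMin (fun z => ∑ i ∈ T, f i z) y := Filter.Eventually.of_forall hy
  rw [← gradient_finset_sum hf, gradient, hmin.fderiv_eq_zero, map_zero]

end Gradient

theorem eq_of_strongly_monotone_of_eq_zero {E : Type*} [NormedAddCommGroup E]
    [InnerProductSpace ℝ E] {F : E → E} {c γ : ℝ} (hγ : 0 < γ)
    (hF : ∀ x y, γ * ‖x - y‖ ^ 2 ≤ ⟪c • (F x - F y), x - y⟫) {y z : E}
    (hy : F y = 0) (hz : F z = 0) : y = z := by
  have h := hF y z
  rw [hy, hz, sub_self, smul_zero, inner_zero_left] at h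
  have : ‖y - z‖ ^ 2 = 0 := le_antisymm (nonpos_of_mul_nonpos_right h hγ) (sq_nonneg _)
  simpa [sub_eq_zero] using this

theorem Set.Subsingleton.dist_le_of_hausdorffDist_le {X : Type*} [PseudoMetricSpace X]
    {A B : Set X} (hA : A.Subsingleton) (hB : B.Subsingleton) {a b : X} (ha : a ∈ A)
    (hb : b ∈ B) {ε : ℝ} (h : Metric.hausdorffDist A B ≤ ε) : dist a b ≤ ε := by
  rwa [hA.eq_singleton_of_mem ha, hB.eq_singleton_of_mem hb, Metric.hausdorffDist_singleton] at h

section Projection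

variable {E : Type*} [NormedAddCommGroup E] [InnerProductSpace ℝ E] {W : Set E}

theorem real_inner_sub_le_zero_of_forall_norm_le (hW : Convex ℝ W) {y p : E} (hp : p ∈ W)
    (hmin : ∀ w ∈ W, ‖p - y‖ ≤ ‖w - y‖) {w : E} (hw : w ∈ W) : ⟪y - p, w - p⟫ ≤ 0 := by
  have : Nonempty W := ⟨⟨p, hp⟩⟩
  refine (norm_eq_iInf_iff_real_inner_le_zero hW hp).mp (le_antisymm ?_ ?_) w hw
  · exact le_ciInf fun z => by simpa only [norm_sub_rev y] using hmin z z.2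
  · exact ciInf_le ⟨0, by rintro _ ⟨z, rfl⟩; positivity⟩ (⟨p, hp⟩ : W)

theorem lipschitzWith_one_of_forall_norm_le (hW : Convex ℝ W) {proj : E → E}
    (hproj : ∀ y, proj y ∈ W ∧ ∀ w ∈ W, ‖proj y - y‖ ≤ ‖w - y‖) : LipschitzWith 1 proj := by
  refine LipschitzWith.of_dist_le_mul fun y z => ?_
  rw [NNReal.coe_one, one_mul, dist_eq_norm, dist_eq_norm]
  set p := proj y
  set q := proj z
  have hy := real_inner_sub_le_zero_of_forall_norm_le hW (hproj y).1 (hproj y).2 (hproj z).1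
  have hz := real_inner_sub_le_zero_of_forall_norm_le hW (hproj z).1 (hproj z).2 (hproj y).1
  have key : ‖p - q‖ ^ 2 ≤ ⟪y - z, p - q⟫ :=
    calc ‖p - q‖ ^ 2 = ⟪p - q, p - q⟫ := (real_inner_self_eq_norm_sq _).symm
      _ ≤ ⟪p - q, p - q⟫ - ⟪y - p, q - p⟫ - ⟪z - q, p - q⟫ := by linarith
      _ = ⟪y - z, p - q⟫ := by
        simp only [inner_sub_left, inner_sub_right, real_inner_comm]; ring
  have := key.trans (real_inner_le_norm _ _)
  nlinarith [norm_nonneg (p - q), norm_nonneg (y - z)]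

end Projection

section LipschitzFamily

variable {ι E : Type*} [NormedAddCommGroup E] {G : ι → E → E} {μ : ℝ}

theorem norm_le_of_sum_erase_eq_zero [Fintype ι] [DecidableEq ι] (hμ : 0 ≤ μ)
    (hG : ∀ i x y, ‖G i x - G i y‖ ≤ μ * ‖x - y‖) {x y : E} {j : ι} {ε : ℝ}
    (hx : ∑ i, G i x = 0) (hy : ∑ i ∈ univ.erase j, G i y = 0) (hxy : ‖y - x‖ ≤ ε) :
    ‖G j x‖ ≤ (Fintype.card ι + 1) * μ * ε := by
  have hGy : G j y = ∑ i, (G i y - G i x) := by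
    rw [sum_sub_distrib, hx, sub_zero, ← add_sum_erase _ _ (mem_univ j), hy, add_zero]
  have hGy_le : ‖G j y‖ ≤ Fintype.card ι * (μ * ε) := by
    rw [hGy]
    refine (norm_sum_le_of_le _ fun i _ => (hG i y x).trans ?_).trans_eq
      (by rw [sum_const, card_univ, nsmul_eq_mul])
    exact mul_le_mul_of_nonneg_left hxy hμ
  have hGxy : ‖G j x - G j y‖ ≤ μ * ε :=
    (hG j x y).trans (mul_le_mul_of_nonneg_left (by rwa [norm_sub_rev]) hμ)
  calc ‖G j x‖ ≤ ‖G j x - G j y‖ + ‖G j y‖ := norm_le_norm_sub_add _ _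
    _ ≤ (Fintype.card ι + 1) * μ * ε := by linarith

theorem norm_sum_sub_le (hG : ∀ i x y, ‖G i x - G i y‖ ≤ μ * ‖x - y‖) (S : Finset ι)
    (x y : E) : ‖∑ i ∈ S, (G i x - G i y)‖ ≤ #S * μ * ‖x - y‖ := by
  refine (norm_sum_le_of_le _ fun i _ => hG i x y).trans_eq ?_
  rw [sum_const, nsmul_eq_mul, mul_assoc]

theorem norm_sum_le_card_mul_add (hG : ∀ i x y, ‖G i x - G i y‖ ≤ μ * ‖x - y‖)
    (S : Finset ι) (x y : E) :
    ‖∑ i ∈ S, G i x‖ ≤ #S * μ * ‖x - y‖ + ‖∑ i ∈ S, G i y‖ :=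
  calc ‖∑ i ∈ S, G i x‖ = ‖∑ i ∈ S, (G i x - G i y) + ∑ i ∈ S, G i y‖ := by
        rw [sum_sub_distrib, sub_add_cancel]
    _ ≤ #S * μ * ‖x - y‖ + ‖∑ i ∈ S, G i y‖ :=
        (norm_add_le _ _).trans (by gcongr; exact norm_sum_sub_le hG S x y)

theorem le_real_inner_sum [InnerProductSpace ℝ E] [Fintype ι] [DecidableEq ι]
    (hG : ∀ i x y, ‖G i x - G i y‖ ≤ μ * ‖x - y‖)
    {κ : ℝ} {x y : E} (hκ : κ * ‖x - y‖ ^ 2 ≤ ⟪∑ i, G i x - ∑ i, G i y, x - y⟫)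
    (S : Finset ι) :
    (κ - #Sᶜ * μ) * ‖x - y‖ ^ 2 - ‖∑ i ∈ S, G i y‖ * ‖x - y‖ ≤
      ⟪∑ i ∈ S, G i x, x - y⟫ := by
  have hcompl : ⟪∑ i ∈ Sᶜ, (G i x - G i y), x - y⟫ ≤ #Sᶜ * μ * ‖x - y‖ ^ 2 :=
    calc _ ≤ ‖∑ i ∈ Sᶜ, (G i x - G i y)‖ * ‖x - y‖ := real_inner_le_norm _ _
      _ ≤ #Sᶜ * μ * ‖x - y‖ * ‖x - y‖ := by gcongr; exact norm_sum_sub_le hG Sᶜ x y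
      _ = #Sᶜ * μ * ‖x - y‖ ^ 2 := by ring
  have hsplit : ∑ i ∈ S, G i x =
      (∑ i, G i x - ∑ i, G i y) - ∑ i ∈ Sᶜ, (G i x - G i y) + ∑ i ∈ S, G i y := by
    rw [← sum_add_sum_compl S (G · x), ← sum_add_sum_compl S (G · y), sum_sub_distrib]
    abel
  rw [hsplit, inner_add_left, inner_sub_left]
  linarith [neg_abs_le ⟪∑ i ∈ S, G i y, x - y⟫, abs_real_inner_le_norm (∑ i ∈ S, G i y) (x - y)]

end LipschitzFamily

section Stochastic

variable {Ω E : Type*} {mΩ : MeasurableSpace Ω} [NormedAddCommGroup E] {P : Measure Ω}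

theorem integral_norm_sum_sq_le {ι : Type*} {X : ι → Ω → E} (S : Finset ι)
    (hX : ∀ j ∈ S, MemLp (X j) 2 P) :
    ∫ ω, ‖∑ j ∈ S, X j ω‖ ^ 2 ∂P ≤ #S * ∑ j ∈ S, ∫ ω, ‖X j ω‖ ^ 2 ∂P := by
  have hsq : ∀ j ∈ S, Integrable (fun ω => ‖X j ω‖ ^ 2) P := fun j hj =>
    (hX j hj).norm.integrable_sq
  have hpt : ∀ ω, ‖∑ j ∈ S, X j ω‖ ^ 2 ≤ #S * ∑ j ∈ S, ‖X j ω‖ ^ 2 := fun ω =>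
    (pow_le_pow_left₀ (norm_nonneg _) (norm_sum_le _ _) 2).trans (sq_sum_le_card_mul_sum_sq ..)
  calc ∫ ω, ‖∑ j ∈ S, X j ω‖ ^ 2 ∂P ≤ ∫ ω, #S * ∑ j ∈ S, ‖X j ω‖ ^ 2 ∂P :=
        integral_mono (memLp_finsetSum S hX).norm.integrable_sq
          ((integrable_finsetSum S hsq).const_mul _) hpt
    _ = #S * ∑ j ∈ S, ∫ ω, ‖X j ω‖ ^ 2 ∂P := by
        rw [integral_const_mul, integral_finsetSum S hsq]

theorem integral_norm_comp_sub_sq_le [IsFiniteMeasure P] {f : E → E} (hf : LipschitzWith 1 f)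
    {a : E} (ha : f a = a) {Y : Ω → E} (hY : MemLp Y 2 P) :
    ∫ ω, ‖f (Y ω) - a‖ ^ 2 ∂P ≤ ∫ ω, ‖Y ω - a‖ ^ 2 ∂P := by
  have hpt : ∀ ω, ‖f (Y ω) - a‖ ^ 2 ≤ ‖Y ω - a‖ ^ 2 := fun ω => by
    gcongr
    simpa [ha, dist_eq_norm] using hf.dist_le_mul (Y ω) a
  have hint : Integrable (fun ω => ‖Y ω - a‖ ^ 2) P := (hY.sub (memLp_const a)).norm.integrable_sq
  have hmeas : AEStronglyMeasurable (fun ω => ‖f (Y ω) - a‖ ^ 2) P :=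
    ((hf.continuous.comp_aestronglyMeasurable hY.1).sub aestronglyMeasurable_const).norm.pow 2
  refine integral_mono (hint.mono' hmeas (ae_of_all _ fun ω => ?_)) hint hpt
  rw [Real.norm_of_nonneg (by positivity)]
  exact hpt ω

variable [InnerProductSpace ℝ E] [CompleteSpace E] [IsProbabilityMeasure P]

theorem integral_norm_sub_sq_of_integral_eq_zero {V : Ω → E} (hV : MemLp V 2 P)
    (h0 : ∫ ω, V ω ∂P = 0) (c : E) :
    ∫ ω, ‖c - V ω‖ ^ 2 ∂P = ‖c‖ ^ 2 + ∫ ω, ‖V ω‖ ^ 2 ∂P := by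
  have hV1 : Integrable V P := hV.integrable one_le_two
  have hinner : Integrable (fun ω => 2 * ⟪c, V ω⟫) P := (hV1.const_inner c).const_mul 2
  have hcross : Integrable (fun ω => ‖c‖ ^ 2 - 2 * ⟪c, V ω⟫) P := (integrable_const _).sub hinner
  calc ∫ ω, ‖c - V ω‖ ^ 2 ∂P = ∫ ω, (‖c‖ ^ 2 - 2 * ⟪c, V ω⟫ + ‖V ω‖ ^ 2) ∂P :=
        integral_congr_ae (ae_of_all _ fun ω => norm_sub_sq_real c (V ω))
    _ = ‖c‖ ^ 2 + ∫ ω, ‖V ω‖ ^ 2 ∂P := by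
        rw [integral_add hcross hV.norm.integrable_sq,
          integral_sub (integrable_const _) hinner, integral_const_mul, integral_inner hV1, h0,
          inner_zero_right]
        simp

theorem integral_norm_sub_smul_sum_sq_le {ι : Type*} {g : ι → Ω → E} {G : ι → E} {σ : ℝ}
    (S : Finset ι) (hg : ∀ j ∈ S, MemLp (g j) 2 P) (hmean : ∀ j ∈ S, ∫ ω, g j ω ∂P = G j)
    (hvar : ∀ j ∈ S, ∫ ω, ‖g j ω - G j‖ ^ 2 ∂P ≤ σ ^ 2) (c : E) (η : ℝ) :
    ∫ ω, ‖c - η • ∑ j ∈ S, g j ω‖ ^ 2 ∂P ≤ ‖c - η • ∑ j ∈ S, G j‖ ^ 2 + η ^ 2 * #S ^ 2 * σ ^ 2 := by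
  set V : Ω → E := fun ω => η • ∑ j ∈ S, (g j ω - G j)
  have hnoise : ∀ j ∈ S, MemLp (fun ω => g j ω - G j) 2 P := fun j hj =>
    (hg j hj).sub (memLp_const _)
  have hV : MemLp V 2 P := (memLp_finsetSum S hnoise).const_smul η
  have hV0 : ∫ ω, V ω ∂P = 0 := by
    rw [integral_smul, integral_finsetSum S fun j hj => (hnoise j hj).integrable one_le_two,
      sum_eq_zero fun j hj => ?_, smul_zero]
    rw [integral_sub ((hg j hj).integrable one_le_two) (integrable_const _), hmean j hj]
    simp
  have hVsq : ∫ ω, ‖V ω‖ ^ 2 ∂P ≤ η ^ 2 * (#S ^ 2 * σ ^ 2) :=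
    calc ∫ ω, ‖V ω‖ ^ 2 ∂P = η ^ 2 * ∫ ω, ‖∑ j ∈ S, (g j ω - G j)‖ ^ 2 ∂P := by
          simp only [V, norm_smul, mul_pow, Real.norm_eq_abs, sq_abs]
          exact integral_const_mul _ _
      _ ≤ η ^ 2 * (#S * ∑ j ∈ S, σ ^ 2) := by
          gcongr
          exact (integral_norm_sum_sq_le S hnoise).trans (by gcongr with j hj; exact hvar j hj)
      _ = η ^ 2 * (#S ^ 2 * σ ^ 2) := by rw [sum_const, nsmul_eq_mul]; ring
  calc ∫ ω, ‖c - η • ∑ j ∈ S, g j ω‖ ^ 2 ∂P = ∫ ω, ‖(c - η • ∑ j ∈ S, G j) - V ω‖ ^ 2 ∂P := by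
        simp only [V, sum_sub_distrib, smul_sub, sub_sub_sub_cancel_right]
    _ = ‖c - η • ∑ j ∈ S, G j‖ ^ 2 + ∫ ω, ‖V ω‖ ^ 2 ∂P :=
        integral_norm_sub_sq_of_integral_eq_zero hV hV0 _
    _ ≤ _ := by linarith

end Stochastic

theorem norm_sub_smul_sq_le {E : Type*} [NormedAddCommGroup E] [InnerProductSpace ℝ E]
    {v h : E} {η m b L c : ℝ} (hη : 0 ≤ η) (hinner : m * ‖v‖ ^ 2 - b ≤ ⟪h, v⟫)
    (hnorm : ‖h‖ ≤ L * ‖v‖ + c) :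
    ‖v - η • h‖ ^ 2 ≤
      (1 - 2 * m * η + η ^ 2 * L ^ 2) * ‖v‖ ^ 2 + 2 * η * b + 2 * η ^ 2 * L * c * ‖v‖
        + η ^ 2 * c ^ 2 := by
  have hsq : ‖h‖ ^ 2 ≤ (L * ‖v‖ + c) ^ 2 := pow_le_pow_left₀ (norm_nonneg _) hnorm 2
  rw [norm_sub_sq_real, real_inner_smul_right, real_inner_comm, norm_smul, Real.norm_eq_abs,
    mul_pow, sq_abs]
  nlinarith [mul_le_mul_of_nonneg_left hinner hη, mul_le_mul_of_nonneg_left hsq (sq_nonneg η)]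

section Redundancy

variable {ι E : Type*} [NormedAddCommGroup E] [InnerProductSpace ℝ E] [CompleteSpace E]

def argminSum (Q : ι → E → ℝ) (T : Finset ι) : Set E :=
  {y | ∀ z, ∑ i ∈ T, Q i y ≤ ∑ i ∈ T, Q i z}

variable [Fintype ι]

/-- Assumption 2, in first-order form: strong monotonicity of the averaged gradients. -/
def SubsetAveragesStronglyConvex (Q : ι → E → ℝ) (r : ℕ) (γ : ℝ) : Prop :=
  ∀ S : Finset ι, Fintype.card ι ≤ #S + r → ∀ x y : E,
    γ * ‖x - y‖ ^ 2 ≤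
      ⟪(#S : ℝ)⁻¹ • (∑ j ∈ S, gradient (Q j) x - ∑ j ∈ S, gradient (Q j) y), x - y⟫

/-- `(0,r;ε)`-redundancy. -/
def IsRedundant (Q : ι → E → ℝ) (r : ℕ) (ε : ℝ) : Prop :=
  ∀ S : Finset ι, Fintype.card ι ≤ #S + r →
    (argminSum Q S).Nonempty ∧ Metric.hausdorffDist (argminSum Q S) (argminSum Q univ) ≤ ε

variable {Q : ι → E → ℝ} {r : ℕ} {μ γ ε : ℝ} {xstar : E}

theorem SubsetAveragesStronglyConvex.subsingleton_argminSum
    (hsc : SubsetAveragesStronglyConvex Q r γ) (hγ : 0 < γ)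
    (hdiff : ∀ i x, DifferentiableAt ℝ (Q i) x) {T : Finset ι}
    (hT : Fintype.card ι ≤ #T + r) : (argminSum Q T).Subsingleton := fun _ hy _ hz =>
  eq_of_strongly_monotone_of_eq_zero hγ (hsc T hT)
    (sum_gradient_eq_zero_of_forall_sum_le (fun i _ => hdiff i _) hy)
    (sum_gradient_eq_zero_of_forall_sum_le (fun i _ => hdiff i _) hz)

theorem IsRedundant.exists_sum_gradient_eq_zero_near (hred : IsRedundant Q r ε)
    (hsc : SubsetAveragesStronglyConvex Q r γ) (hγ : 0 < γ)
    (hdiff : ∀ i x, DifferentiableAt ℝ (Q i) x) (hxmin : xstar ∈ argminSum Q univ)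
    {T : Finset ι} (hT : Fintype.card ι ≤ #T + r) :
    ∃ y, ∑ i ∈ T, gradient (Q i) y = 0 ∧ ‖y - xstar‖ ≤ ε := by
  obtain ⟨⟨y, hy⟩, hdist⟩ := hred T hT
  refine ⟨y, sum_gradient_eq_zero_of_forall_sum_le (fun i _ => hdiff i y) hy, ?_⟩
  rw [← dist_eq_norm]
  exact (hsc.subsingleton_argminSum hγ hdiff hT).dist_le_of_hausdorffDist_le
    (hsc.subsingleton_argminSum hγ hdiff (by simp)) hy hxmin hdist

theorem IsRedundant.norm_gradient_le (hred : IsRedundant Q r ε)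
    (hsc : SubsetAveragesStronglyConvex Q r γ) (hγ : 0 < γ)
    (hdiff : ∀ i x, DifferentiableAt ℝ (Q i) x) (hxmin : xstar ∈ argminSum Q univ)
    (hlip : ∀ i x y, ‖gradient (Q i) x - gradient (Q i) y‖ ≤ μ * ‖x - y‖)
    (hμ : 0 ≤ μ) (hr : 1 ≤ r) (j : ι) :
    ‖gradient (Q j) xstar‖ ≤ 2 * Fintype.card ι * μ * ε := by
  classical
  obtain ⟨y, hy, hyx⟩ := hred.exists_sum_gradient_eq_zero_near hsc hγ hdiff hxmin
    (T := univ.erase j) (by rw [card_erase_of_mem (mem_univ j), card_univ]; omega)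
  have hj := norm_le_of_sum_erase_eq_zero hμ hlip
    (sum_gradient_eq_zero_of_forall_sum_le (fun i _ => hdiff i xstar) hxmin) hy hyx
  have hn : (1 : ℝ) ≤ Fintype.card ι := Nat.one_le_cast.mpr (Fintype.card_pos_iff.mpr ⟨j⟩)
  have hε : 0 ≤ ε := (norm_nonneg _).trans hyx
  nlinarith [mul_nonneg hμ hε]

theorem IsRedundant.norm_sum_gradient_le [DecidableEq ι] (hred : IsRedundant Q r ε)
    (hsc : SubsetAveragesStronglyConvex Q r γ) (hγ : 0 < γ)
    (hdiff : ∀ i x, DifferentiableAt ℝ (Q i) x) (hxmin : xstar ∈ argminSum Q univ)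
    (hlip : ∀ i x y, ‖gradient (Q i) x - gradient (Q i) y‖ ≤ μ * ‖x - y‖) (hμ : 0 ≤ μ)
    {S : Finset ι} (hS : Fintype.card ι ≤ #S + r) :
    ‖∑ j ∈ S, gradient (Q j) xstar‖ ≤ #S * (2 * Fintype.card ι * μ * ε) ∧
      ‖∑ j ∈ S, gradient (Q j) xstar‖ ≤ #Sᶜ * (2 * Fintype.card ι * μ * ε) := by
  have hsum : ∑ j, gradient (Q j) xstar = 0 :=
    sum_gradient_eq_zero_of_forall_sum_le (fun i _ => hdiff i xstar) hxmin
  rcases Sᶜ.eq_empty_or_nonempty with hSc | hSc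
  · have hε : 0 ≤ ε := Metric.hausdorffDist_nonneg.trans (hred univ (by simp)).2
    rw [(compl_eq_empty_iff S).mp hSc, hsum, norm_zero]
    constructor <;> positivity
  · have hr : 1 ≤ r := by
      have := card_add_card_compl S
      have := hSc.card_pos
      omega
    have hj := hred.norm_gradient_le hsc hγ hdiff hxmin hlip hμ hr
    have hcompl : ∑ j ∈ S, gradient (Q j) xstar = -∑ j ∈ Sᶜ, gradient (Q j) xstar :=
      eq_neg_of_add_eq_zero_left ((sum_add_sum_compl S _).trans hsum)
    constructor
    · exact (norm_sum_le_of_le S fun j _ => hj j).trans_eq (by rw [sum_const, nsmul_eq_mul])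
    · rw [hcompl, norm_neg]
      exact (norm_sum_le_of_le Sᶜ fun j _ => hj j).trans_eq (by rw [sum_const, nsmul_eq_mul])

theorem IsRedundant.norm_sub_smul_sum_gradient_sq_le [Nonempty ι] [DecidableEq ι]
    (hred : IsRedundant Q r ε) (hsc : SubsetAveragesStronglyConvex Q r γ) (hγ : 0 < γ)
    (hdiff : ∀ i x, DifferentiableAt ℝ (Q i) x) (hxmin : xstar ∈ argminSum Q univ)
    (hlip : ∀ i x y, ‖gradient (Q i) x - gradient (Q i) y‖ ≤ μ * ‖x - y‖) (hμ : 0 ≤ μ)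
    {S : Finset ι} (hS : #S + r = Fintype.card ι) {η : ℝ} (hη : 0 ≤ η) {x : E} {Γ : ℝ}
    (hΓ : ‖x - xstar‖ ≤ Γ) :
    ‖(x - xstar) - η • ∑ j ∈ S, gradient (Q j) x‖ ^ 2 ≤
      (1 - 2 * ((Fintype.card ι : ℝ) * γ - r * μ) * η
          + ((Fintype.card ι : ℝ) - r) ^ 2 * η ^ 2 * μ ^ 2) * ‖x - xstar‖ ^ 2
        + 4 * Fintype.card ι * η * μ * ε * ((r : ℝ) + ((Fintype.card ι : ℝ) - r) ^ 2 * η * μ) * Γ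
        + 4 * (Fintype.card ι : ℝ) ^ 2 * ((Fintype.card ι : ℝ) - r) ^ 2 * η ^ 2 * μ ^ 2
          * ε ^ 2 := by
  have hScard : (#S : ℝ) = Fintype.card ι - r := by rw [← hS]; push_cast; ring
  have hSccard : (#Sᶜ : ℝ) = r := by
    have := card_add_card_compl S
    exact_mod_cast (by omega : #Sᶜ = r)
  obtain ⟨hBS, hBSc⟩ := hred.norm_sum_gradient_le hsc hγ hdiff hxmin hlip hμ hS.ge
  have hε : 0 ≤ ε := Metric.hausdorffDist_nonneg.trans (hred univ (by simp)).2
  have hfull : Fintype.card ι * γ * ‖x - xstar‖ ^ 2 ≤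
      ⟪∑ j, gradient (Q j) x - ∑ j, gradient (Q j) xstar, x - xstar⟫ := by
    have h := hsc univ (by simp) x xstar
    rw [real_inner_smul_left, card_univ] at h
    have hn : (0 : ℝ) < Fintype.card ι := Nat.cast_pos.mpr Fintype.card_pos
    calc _ ≤ Fintype.card ι * ((Fintype.card ι : ℝ)⁻¹ * _) := by rw [mul_assoc]; gcongr
      _ = _ := by field_simp
  have hinner := le_real_inner_sum hlip hfull S
  have hnorm := norm_sum_le_card_mul_add hlip S x xstar
  rw [hScard] at hBS hnorm
  rw [hSccard] at hBSc hinner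
  set n : ℝ := (Fintype.card ι : ℝ)
  set A := ‖x - xstar‖
  have hstep := norm_sub_smul_sq_le (v := x - xstar) (m := n * γ - r * μ) (L := (n - r) * μ)
    (b := r * (2 * n * μ * ε) * Γ) (c := (n - r) * (2 * n * μ * ε)) hη
    (hinner.trans' (by gcongr))
    (hnorm.trans (by gcongr))
  have hcross : 4 * n * (n - r) ^ 2 * η ^ 2 * μ ^ 2 * ε * A
      ≤ 4 * n * (n - r) ^ 2 * η ^ 2 * μ ^ 2 * ε * Γ := by gcongr
  linarith

end Redundancy

theorem stmt16_general {d n r : ℕ} (hd : 1 ≤ d) (hrn : r < n)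
    (Q : Fin n → EuclideanSpace ℝ (Fin d) → ℝ) (μ γ ε σ : ℝ) (hγ : 0 < γ)
    (hdiff : ∀ i x, DifferentiableAt ℝ (Q i) x)
    -- Assumption 1: each ∇Q_i is μ-Lipschitz
    (hlip : ∀ i x y,
      ‖gradient (Q i) x - gradient (Q i) y‖ ≤ μ * ‖x - y‖)
    -- Assumption 2: averages over sets of ≥ n−r agents are γ-strongly convex
    (hsc : ∀ S : Finset (Fin n), n ≤ S.card + r →
      ∀ x y : EuclideanSpace ℝ (Fin d),
        γ * ‖x - y‖ ^ 2 ≤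
          ⟪(S.card : ℝ)⁻¹ •
              (∑ j ∈ S, gradient (Q j) x - ∑ j ∈ S, gradient (Q j) y), x - y⟫)
    -- (0,r;ε)-redundancy
    (hred : ∀ Shat : Finset (Fin n), n ≤ Shat.card + r →
      ({y : EuclideanSpace ℝ (Fin d) |
          ∀ z, ∑ i ∈ Shat, Q i y ≤ ∑ i ∈ Shat, Q i z}.Nonempty ∧
        Metric.hausdorffDist
          {y : EuclideanSpace ℝ (Fin d) | ∀ z, ∑ i ∈ Shat, Q i y ≤ ∑ i ∈ Shat, Q i z}
          {y : EuclideanSpace ℝ (Fin d) | ∀ z, ∑ i, Q i y ≤ ∑ i, Q i z} ≤ ε))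
    -- convex compact set W and Euclidean projection onto it
    (W : Set (EuclideanSpace ℝ (Fin d))) (hWconv : Convex ℝ W)
    (proj : EuclideanSpace ℝ (Fin d) → EuclideanSpace ℝ (Fin d))
    (hproj : ∀ y, proj y ∈ W ∧ ∀ w ∈ W, ‖proj y - y‖ ≤ ‖w - y‖)
    -- x* ∈ W minimizes the total cost, and Γ = max_{w ∈ W} ‖w − x*‖
    (xstar : EuclideanSpace ℝ (Fin d)) (hxW : xstar ∈ W)
    (hxmin : ∀ z, ∑ i, Q i xstar ≤ ∑ i, Q i z)
    (Γ : ℝ) (hΓ : IsGreatest ((fun w => ‖w - xstar‖) '' W) Γ)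
    -- current iterate, responding agents, step size
    (x : EuclideanSpace ℝ (Fin d)) (hx : x ∈ W)
    (S : Finset (Fin n)) (hS : S.card + r = n)
    (η : ℝ) (hη : 0 < η)
    -- stochastic gradients: unbiased with variance at most σ²
    {Ω : Type} {mΩ : MeasurableSpace Ω} (P : Measure Ω) [IsProbabilityMeasure P]
    (g : Fin n → Ω → EuclideanSpace ℝ (Fin d))
    (hgLp : ∀ j ∈ S, MemLp (g j) 2 P)
    (hmean : ∀ j ∈ S, (∫ ω, g j ω ∂P) = gradient (Q j) x)
    (hvar : ∀ j ∈ S, (∫ ω, ‖g j ω - gradient (Q j) x‖ ^ 2 ∂P) ≤ σ ^ 2) :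
    (∫ ω, ‖proj (x - η • ∑ j ∈ S, g j ω) - xstar‖ ^ 2 ∂P) ≤
      (1 - 2 * ((n : ℝ) * γ - r * μ) * η + ((n : ℝ) - r) ^ 2 * η ^ 2 * μ ^ 2)
          * ‖x - xstar‖ ^ 2
        + 4 * n * η * μ * ε * ((r : ℝ) + ((n : ℝ) - r) ^ 2 * η * μ) * Γ
        + 4 * (n : ℝ) ^ 2 * ((n : ℝ) - r) ^ 2 * η ^ 2 * μ ^ 2 * ε ^ 2
        + ((n : ℝ) - r) ^ 2 * η ^ 2 * σ ^ 2 := by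
  have hμ : 0 ≤ μ := by
    have h := hlip ⟨0, by omega⟩ (EuclideanSpace.single ⟨0, hd⟩ 1) 0
    rw [sub_zero, PiLp.norm_single, norm_one, mul_one] at h
    exact (norm_nonneg _).trans h
  have : Nonempty (Fin n) := ⟨⟨0, by omega⟩⟩
  have hsc' : SubsetAveragesStronglyConvex Q r γ := fun T hT => hsc T (by simpa using hT)
  have hred' : IsRedundant Q r ε := fun T hT => hred T (by simpa using hT)
  have hdet := hred'.norm_sub_smul_sum_gradient_sq_le hsc' hγ hdiff hxmin hlip hμ
    (S := S) (by simpa using hS) hη.le (hΓ.2 ⟨x, hx, rfl⟩)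
  have hScard : (#S : ℝ) = n - r := by rw [eq_sub_iff_add_eq]; exact_mod_cast hS
  have hfix : proj xstar = xstar := by simpa [sub_eq_zero] using (hproj xstar).2 xstar hxW
  have hiter : MemLp (fun ω => x - η • ∑ j ∈ S, g j ω) 2 P :=
    (memLp_const x).sub ((memLp_finsetSum S hgLp).const_smul η)
  simp only [Fintype.card_fin] at hdet
  calc ∫ ω, ‖proj (x - η • ∑ j ∈ S, g j ω) - xstar‖ ^ 2 ∂P
      ≤ ∫ ω, ‖(x - xstar) - η • ∑ j ∈ S, g j ω‖ ^ 2 ∂P := by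
        simpa only [sub_right_comm] using integral_norm_comp_sub_sq_le
          (lipschitzWith_one_of_forall_norm_le hWconv hproj) hfix hiter
    _ ≤ ‖(x - xstar) - η • ∑ j ∈ S, gradient (Q j) x‖ ^ 2 + η ^ 2 * #S ^ 2 * σ ^ 2 :=
        integral_norm_sub_smul_sum_sq_le S hgLp hmean hvar _ _
    _ ≤ _ := by rw [hScard]; linarith

/-- one-step mean-squared-error bound for D-SGD in the asynchronous
setting (Problem CS), under Assumptions 1, 2, 4 and (0,r;ε)-redundancy. -/
theorem stmt16 {d n r : ℕ} (hd : 1 ≤ d) (hrn : r < n)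
    (Q : Fin n → EuclideanSpace ℝ (Fin d) → ℝ) (μ γ ε σ : ℝ) (hγ : 0 < γ)
    (hdiff : ∀ i x, DifferentiableAt ℝ (Q i) x)
    -- Assumption 1: each ∇Q_i is μ-Lipschitz
    (hlip : ∀ i x y,
      ‖gradient (Q i) x - gradient (Q i) y‖ ≤ μ * ‖x - y‖)
    -- Assumption 2: averages over sets of ≥ n−r agents are γ-strongly convex
    (hsc : ∀ S : Finset (Fin n), n ≤ S.card + r →
      ∀ x y : EuclideanSpace ℝ (Fin d),
        γ * ‖x - y‖ ^ 2 ≤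
          ⟪(S.card : ℝ)⁻¹ •
              (∑ j ∈ S, gradient (Q j) x - ∑ j ∈ S, gradient (Q j) y), x - y⟫)
    -- (0,r;ε)-redundancy
    (hred : ∀ Shat : Finset (Fin n), n ≤ Shat.card + r →
      ({y : EuclideanSpace ℝ (Fin d) |
          ∀ z, ∑ i ∈ Shat, Q i y ≤ ∑ i ∈ Shat, Q i z}.Nonempty ∧
        Metric.hausdorffDist
          {y : EuclideanSpace ℝ (Fin d) | ∀ z, ∑ i ∈ Shat, Q i y ≤ ∑ i ∈ Shat, Q i z}
          {y : EuclideanSpace ℝ (Fin d) | ∀ z, ∑ i, Q i y ≤ ∑ i, Q i z} ≤ ε))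
    -- convex compact set W and Euclidean projection onto it
    (W : Set (EuclideanSpace ℝ (Fin d))) (hWconv : Convex ℝ W) (hWcomp : IsCompact W)
    (proj : EuclideanSpace ℝ (Fin d) → EuclideanSpace ℝ (Fin d))
    (hproj : ∀ y, proj y ∈ W ∧ ∀ w ∈ W, ‖proj y - y‖ ≤ ‖w - y‖)
    -- x* ∈ W minimizes the total cost, and Γ = max_{w ∈ W} ‖w − x*‖
    (xstar : EuclideanSpace ℝ (Fin d)) (hxW : xstar ∈ W)
    (hxmin : ∀ z, ∑ i, Q i xstar ≤ ∑ i, Q i z)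
    (Γ : ℝ) (hΓ : IsGreatest ((fun w => ‖w - xstar‖) '' W) Γ)
    -- current iterate, responding agents, step size
    (x : EuclideanSpace ℝ (Fin d)) (hx : x ∈ W)
    (S : Finset (Fin n)) (hS : S.card + r = n)
    (η : ℝ) (hη : 0 < η)
    -- stochastic gradients: unbiased with variance at most σ²
    {Ω : Type} {mΩ : MeasurableSpace Ω} (P : Measure Ω) [IsProbabilityMeasure P]
    (g : Fin n → Ω → EuclideanSpace ℝ (Fin d))
    (hgLp : ∀ j ∈ S, MemLp (g j) 2 P)
    (hmean : ∀ j ∈ S, (∫ ω, g j ω ∂P) = gradient (Q j) x)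
    (hvar : ∀ j ∈ S, (∫ ω, ‖g j ω - gradient (Q j) x‖ ^ 2 ∂P) ≤ σ ^ 2) :
    (∫ ω, ‖proj (x - η • ∑ j ∈ S, g j ω) - xstar‖ ^ 2 ∂P) ≤
      (1 - 2 * ((n : ℝ) * γ - r * μ) * η + ((n : ℝ) - r) ^ 2 * η ^ 2 * μ ^ 2)
          * ‖x - xstar‖ ^ 2
        + 4 * n * η * μ * ε * ((r : ℝ) + ((n : ℝ) - r) ^ 2 * η * μ) * Γ
        + 4 * (n : ℝ) ^ 2 * ((n : ℝ) - r) ^ 2 * η ^ 2 * μ ^ 2 * ε ^ 2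
        + ((n : ℝ) - r) ^ 2 * η ^ 2 * σ ^ 2 :=
  stmt16_general hd hrn Q μ γ ε σ hγ hdiff hlip hsc hred W hWconv proj hproj xstar hxW hxmin Γ hΓ x
    hx S hS η hη (mΩ := mΩ) P g hgLp hmean hvar
end
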